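/- arXiv:math/0204221 — 6 statements merged into one kernel-verified Lean document; each statement's English description precedes it below -/
import Mathlib

section
/- Let 𝓑 be the mapping cone of the chain map given by multiplication by c from the Koszul complex K(x_1,…,x_n) to itself, i.e. 𝓑_j = ⋀^j R^n ⊕ ⋀^{j−1} R^n with differential β(ω,η) = (ι_x(ω) + (−1)^j c·η, ι_x(η)). Then: (i) H_k(𝓑) = 0 for all k ≥ 3; (ii) H_2(𝓑) is isomorphic as an R-module to ann_{B'}(x_n) ∩ ann_{B'}(c) (intersection of annihilators inside B'); (iii) there is a k-vector space isomorphism H_1(𝓑) ≅ ann_{B'}(x_n)/(c·ann_{B'}(x_n)) ⊕ ann_B(c); (iv) H_0(𝓑) ≅ B/(c). -/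
/-!
Splitting the basis vectors `e_S` of `⋀ Rⁿ` according to whether `n - 1 ∈ S` identifies the
Koszul complex `K` of `x` with the mapping cone of multiplication by `x (n - 1)` on the Koszul
complex `K'` of `x 0, …, x (n - 2)`. Iterating this splitting and using the facts below, the
regularity of `x 0, …, x (n - 2)` makes `K'` acyclic with `H₀(K') = B'`.

For the cone `C` of multiplication by `c` on any complex `A`, the long exact sequence
`Hⱼ(A) → Hⱼ(A) → Hⱼ(C) → Hⱼ₋₁(A) → Hⱼ₋₁(A)` (both outer maps multiplication by `c`) gives:
`Hⱼ(C) = 0` if `A` is exact in degrees `j` and `j - 1`; `H₂(C) ≅ ker(c on H₁(A))` if `H₂(A) = 0`;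
and `0 → H₁(A)/c H₁(A) → H₁(C) → ker(c on H₀(A)) → 0`, which splits over the field `k`.
With `A = K'` and `c = x (n - 1)` this yields `Hⱼ(K) = 0` for `j ≥ 2` and, as `H₁(K') = 0`,
`H₁(K) ≅ ann_{B'}(x (n - 1))`; with `A = K` it yields (i)–(iii), while `H₀(C) = B/(c)` directly.
-/

/-- Degree `j` part `⋀ʲ Rⁿ` of the Koszul complex (coefficients w.r.t. the basis
`e_S`, `S` a `j`-element subset of `Fin n`). -/
abbrev KSp (R : Type*) [CommRing R] (n j : ℕ) : Type _ :=
  {s : Finset (Fin n) // s.card = j} → R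

/-- The Koszul differential: contraction with `x`. -/
noncomputable def koszulD {R : Type*} [CommRing R] {n : ℕ} (x : Fin n → R) (j : ℕ) :
    KSp R n (j + 1) →ₗ[R] KSp R n j where
  toFun ω t := ∑ i : Fin n,
    if h : i ∈ t.1 then 0
    else (-1 : R) ^ (t.1.filter (· < i)).card * x i *
      ω ⟨insert i t.1, by rw [Finset.card_insert_of_notMem h, t.2]⟩
  map_add' ω η := funext fun t => by
    dsimp only [Pi.add_apply]
    rw [← Finset.sum_add_distrib]
    refine Finset.sum_congr rfl fun i _ => ?_
    split_ifs with h
    · simp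
    · ring
  map_smul' r ω := funext fun t => by
    dsimp only [Pi.smul_apply, RingHom.id_apply, smul_eq_mul]
    rw [Finset.mul_sum]
    refine Finset.sum_congr rfl fun i _ => ?_
    split_ifs with h
    · simp
    · ring

/-- Differential `𝓑₁ = ⋀¹Rⁿ ⊕ ⋀⁰Rⁿ → 𝓑₀ = ⋀⁰Rⁿ` of the mapping cone of
multiplication by `c` on the Koszul complex: `β(ω, η) = ι_x ω + (−1)¹ c η`. -/
noncomputable def coneD0 {R : Type*} [CommRing R] {n : ℕ} (x : Fin n → R) (c : R) :
    (KSp R n 1 × KSp R n 0) →ₗ[R] KSp R n 0 :=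
  (koszulD x 0).comp (LinearMap.fst R _ _) - c • (LinearMap.snd R _ _)

/-- Differential `𝓑_{j+2} = ⋀^{j+2}Rⁿ ⊕ ⋀^{j+1}Rⁿ → 𝓑_{j+1} = ⋀^{j+1}Rⁿ ⊕ ⋀ʲRⁿ` of
the mapping cone: `β(ω, η) = (ι_x ω + (−1)^{j+2} c η, ι_x η)`. -/
noncomputable def coneDsucc {R : Type*} [CommRing R] {n : ℕ} (x : Fin n → R) (c : R)
    (j : ℕ) : (KSp R n (j + 2) × KSp R n (j + 1)) →ₗ[R] (KSp R n (j + 1) × KSp R n j) :=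
  LinearMap.prod
    ((koszulD x (j + 1)).comp (LinearMap.fst R _ _) +
      ((-1 : R) ^ (j + 2) * c) • (LinearMap.snd R _ _))
    ((koszulD x j).comp (LinearMap.snd R _ _))

open LinearMap (ker range)
open scoped Pointwise

section Homology

variable {R : Type*} [CommRing R] {L M N L' M' N' : Type*}
  [AddCommGroup L] [Module R L] [AddCommGroup M] [Module R M] [AddCommGroup N] [Module R N]
  [AddCommGroup L'] [Module R L'] [AddCommGroup M'] [Module R M'] [AddCommGroup N'] [Module R N']

abbrev homologyAt (g : L →ₗ[R] M) (f : M →ₗ[R] N) : Type _ :=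
  ker f ⧸ (range g).comap (ker f).subtype

theorem subsingleton_homologyAt_iff (g : L →ₗ[R] M) (f : M →ₗ[R] N) :
    Subsingleton (homologyAt g f) ↔ ker f ≤ range g := by
  rw [Submodule.Quotient.subsingleton_iff, Submodule.comap_subtype_eq_top]

variable {g : L →ₗ[R] M} {f : M →ₗ[R] N} {g' : L' →ₗ[R] M'} {f' : M' →ₗ[R] N'}

theorem map_ker_eq_of_linearEquiv (eM : M ≃ₗ[R] M') (eN : N ≃ₗ[R] N')
    (hf : ∀ m, eN (f m) = f' (eM m)) :
    (ker f).map (eM : M →ₗ[R] M') = ker f' := by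
  ext m'
  rw [Submodule.mem_map_equiv, LinearMap.mem_ker, LinearMap.mem_ker, ← eN.map_eq_zero_iff, hf,
    eM.apply_symm_apply]

noncomputable def homologyAtCongr (eL : L ≃ₗ[R] L') (eM : M ≃ₗ[R] M') (eN : N ≃ₗ[R] N')
    (hg : ∀ l, eM (g l) = g' (eL l)) (hf : ∀ m, eN (f m) = f' (eM m)) :
    homologyAt g f ≃ₗ[R] homologyAt g' f' :=
  Submodule.Quotient.equiv _ _ (eM.ofSubmodules _ _ (map_ker_eq_of_linearEquiv eM eN hf)) (by
    ext ⟨m', hm'⟩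
    simp only [Submodule.mem_map, Submodule.mem_comap, Submodule.subtype_apply,
      LinearMap.mem_range, Subtype.exists, Subtype.ext_iff]
    constructor
    · rintro ⟨_, _, ⟨l, rfl⟩, rfl⟩
      exact ⟨eL l, (hg l).symm⟩
    · rintro ⟨l', rfl⟩
      have hl : eM (g (eL.symm l')) = g' l' := by rw [hg, eL.apply_symm_apply]
      refine ⟨g (eL.symm l'), ?_, ⟨_, rfl⟩, hl⟩
      rw [LinearMap.mem_ker, ← eN.map_eq_zero_iff, hf, hl]
      exact hm')

theorem ker_le_range_iff_of_linearEquiv (eL : L ≃ₗ[R] L') (eM : M ≃ₗ[R] M') (eN : N ≃ₗ[R] N')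
    (hg : ∀ l, eM (g l) = g' (eL l)) (hf : ∀ m, eN (f m) = f' (eM m)) :
    ker f ≤ range g ↔ ker f' ≤ range g' := by
  rw [← subsingleton_homologyAt_iff, ← subsingleton_homologyAt_iff]
  exact (homologyAtCongr eL eM eN hg hf).toEquiv.subsingleton_congr

end Homology

section SMulCone

variable {R : Type*} [CommRing R] (A : ℕ → Type*) [∀ j, AddCommGroup (A j)]
  [∀ j, Module R (A j)] (d : ∀ j, A (j + 1) →ₗ[R] A j) (c : R)

noncomputable def smulConeD0 : (A 1 × A 0) →ₗ[R] A 0 :=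
  (d 0).comp (LinearMap.fst R _ _) - c • (LinearMap.snd R _ _)

noncomputable def smulConeDSucc (j : ℕ) : (A (j + 2) × A (j + 1)) →ₗ[R] (A (j + 1) × A j) :=
  LinearMap.prod
    ((d (j + 1)).comp (LinearMap.fst R _ _) + ((-1 : R) ^ (j + 2) * c) • (LinearMap.snd R _ _))
    ((d j).comp (LinearMap.snd R _ _))

variable {A d c}

@[simp]
theorem smulConeD0_apply (p : A 1 × A 0) : smulConeD0 A d c p = d 0 p.1 - c • p.2 := rfl

theorem smulConeDSucc_apply (j : ℕ) (p : A (j + 2) × A (j + 1)) :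
    smulConeDSucc A d c j p = (d (j + 1) p.1 + ((-1 : R) ^ (j + 2) * c) • p.2, d j p.2) := rfl

@[simp]
theorem smulConeDSucc_zero_apply (p : A 2 × A 1) :
    smulConeDSucc A d c 0 p = (d 1 p.1 + c • p.2, d 0 p.2) := by
  simp [smulConeDSucc_apply]

theorem smulConeDSucc_succ_apply (j : ℕ) (p : A (j + 3) × A (j + 2)) :
    smulConeDSucc A d c (j + 1) p =
      (d (j + 2) p.1 - ((-1 : R) ^ (j + 2) * c) • p.2, d (j + 1) p.2) := by
  simp [smulConeDSucc_apply, pow_succ, sub_eq_add_neg]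

theorem smulConeDSucc_ker_le_range {j : ℕ} (h₀ : ker (d j) ≤ range (d (j + 1)))
    (h₁ : ker (d (j + 1)) ≤ range (d (j + 2))) :
    ker (smulConeDSucc A d c j) ≤ range (smulConeDSucc A d c (j + 1)) := by
  rintro ⟨ω, η⟩ hp
  simp only [LinearMap.mem_ker, smulConeDSucc_apply, Prod.mk_eq_zero] at hp
  obtain ⟨ξ, rfl⟩ := h₀ hp.2
  obtain ⟨ζ, hζ⟩ := h₁ (x := ω + ((-1 : R) ^ (j + 2) * c) • ξ) (by simpa using hp.1)
  exact ⟨(ζ, ξ), by simp [smulConeDSucc_succ_apply, hζ]⟩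

theorem smulConeD0_ker_le_range (h : ker (d 0) ≤ range (d 1))
    (hc : ∀ a, c • a ∈ range (d 0) → a ∈ range (d 0)) :
    ker (smulConeD0 A d c) ≤ range (smulConeDSucc A d c 0) := by
  rintro ⟨ω, η⟩ hp
  rw [LinearMap.mem_ker, smulConeD0_apply, sub_eq_zero] at hp
  obtain ⟨ξ, rfl⟩ := hc η ⟨ω, hp⟩
  obtain ⟨ζ, hζ⟩ := h (x := ω - c • ξ) (by simp [hp])
  exact ⟨(ζ, ξ), by simp [hζ]⟩

theorem range_smulConeD0 : range (smulConeD0 A d c) = range (d 0) ⊔ c • ⊤ := by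
  ext a
  simp only [Submodule.mem_sup, LinearMap.mem_range, Submodule.mem_smul_pointwise_iff_exists,
    Submodule.mem_top, true_and, Prod.exists, smulConeD0_apply]
  constructor
  · rintro ⟨ω, η, rfl⟩
    exact ⟨_, ⟨ω, rfl⟩, _, ⟨-η, rfl⟩, by simp [sub_eq_add_neg]⟩
  · rintro ⟨_, ⟨ω, rfl⟩, _, ⟨b, rfl⟩, rfl⟩
    exact ⟨ω, -b, by simp [sub_eq_add_neg]⟩

theorem smulConeDSucc_zero_eq_zero_iff {p : A 2 × A 1} :
    smulConeDSucc A d c 0 p = 0 ↔ d 1 p.1 + c • p.2 = 0 ∧ d 0 p.2 = 0 := by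
  simp

variable (d c) in
noncomputable def smulConeCycleTwoToTorsion :
    ker (smulConeDSucc A d c 0) →ₗ[R] Submodule.torsionBy R (homologyAt (d 1) (d 0)) c :=
  LinearMap.codRestrict _
    (Submodule.mkQ _ ∘ₗ LinearMap.codRestrict (ker (d 0))
      (LinearMap.snd R _ _ ∘ₗ Submodule.subtype _)
      fun z => (smulConeDSucc_zero_eq_zero_iff.mp z.2).2)
    fun z => by
      rw [Submodule.mem_torsionBy_iff, LinearMap.comp_apply, ← map_smul,
        Submodule.mkQ_apply, Submodule.Quotient.mk_eq_zero]
      refine ⟨-z.1.1, ?_⟩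
      change d 1 (-z.1.1) = c • z.1.2
      rw [map_neg, neg_eq_iff_add_eq_zero]
      exact (smulConeDSucc_zero_eq_zero_iff.mp z.2).1

theorem smulConeCycleTwoToTorsion_apply (z : ker (smulConeDSucc A d c 0)) :
    (smulConeCycleTwoToTorsion d c z : homologyAt (d 1) (d 0)) =
      Submodule.Quotient.mk ⟨z.1.2, (smulConeDSucc_zero_eq_zero_iff.mp z.2).2⟩ := rfl

theorem smulConeCycleTwoToTorsion_surjective :
    Function.Surjective (smulConeCycleTwoToTorsion d c) := by
  rintro ⟨t, ht⟩
  obtain ⟨⟨η, hη⟩, rfl⟩ := Submodule.mkQ_surjective _ t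
  rw [Submodule.mem_torsionBy_iff, Submodule.mkQ_apply, ← Submodule.Quotient.mk_smul,
    Submodule.Quotient.mk_eq_zero] at ht
  obtain ⟨ω, hω⟩ := ht
  refine ⟨⟨(-ω, η), smulConeDSucc_zero_eq_zero_iff.mpr ⟨?_, hη⟩⟩, rfl⟩
  rw [map_neg, neg_add_eq_zero]
  exact hω

theorem ker_smulConeCycleTwoToTorsion (h : ker (d 1) ≤ range (d 2)) :
    ker (smulConeCycleTwoToTorsion d c) =
      (range (smulConeDSucc A d c 1)).comap (ker (smulConeDSucc A d c 0)).subtype := by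
  ext ⟨⟨ω, η⟩, hz⟩
  obtain ⟨hω, hη⟩ := smulConeDSucc_zero_eq_zero_iff.mp hz
  rw [LinearMap.mem_ker, ← Submodule.coe_eq_zero, smulConeCycleTwoToTorsion_apply,
    Submodule.Quotient.mk_eq_zero, Submodule.mem_comap, Submodule.mem_comap]
  constructor
  · rintro ⟨ξ, hξ⟩
    obtain ⟨ζ, hζ⟩ := h (x := ω + c • ξ) (by simpa [hξ] using hω)
    exact ⟨(ζ, ξ), by simp [smulConeDSucc_succ_apply, hζ, hξ]⟩
  · rintro ⟨⟨ζ, ξ⟩, hq⟩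
    exact ⟨ξ, congrArg Prod.snd hq⟩

noncomputable def smulConeHomologyTwoEquiv (h : ker (d 1) ≤ range (d 2)) :
    homologyAt (smulConeDSucc A d c 1) (smulConeDSucc A d c 0) ≃ₗ[R]
      Submodule.torsionBy R (homologyAt (d 1) (d 0)) c :=
  (Submodule.quotEquivOfEq _ _ (ker_smulConeCycleTwoToTorsion h).symm).trans
    ((smulConeCycleTwoToTorsion d c).quotKerEquivOfSurjective
      smulConeCycleTwoToTorsion_surjective)

variable (d c) in
noncomputable def smulConeCycleOneToTorsion :
    ker (smulConeD0 A d c) →ₗ[R] Submodule.torsionBy R (A 0 ⧸ range (d 0)) c :=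
  LinearMap.codRestrict _ ((range (d 0)).mkQ ∘ₗ LinearMap.snd R _ _ ∘ₗ Submodule.subtype _)
    fun z => by
      rw [Submodule.mem_torsionBy_iff, LinearMap.comp_apply, ← map_smul, Submodule.mkQ_apply,
        Submodule.Quotient.mk_eq_zero]
      exact ⟨z.1.1, sub_eq_zero.mp z.2⟩

theorem smulConeCycleOneToTorsion_apply (z : ker (smulConeD0 A d c)) :
    (smulConeCycleOneToTorsion d c z : A 0 ⧸ range (d 0)) = Submodule.Quotient.mk z.1.2 := rfl

variable (d c) in
noncomputable def smulConeHomologyOneProj :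
    homologyAt (smulConeDSucc A d c 0) (smulConeD0 A d c) →ₗ[R]
      Submodule.torsionBy R (A 0 ⧸ range (d 0)) c :=
  Submodule.liftQ _ (smulConeCycleOneToTorsion d c) <| by
    rintro z ⟨⟨ζ, ξ⟩, hq⟩
    rw [LinearMap.mem_ker, ← Submodule.coe_eq_zero, smulConeCycleOneToTorsion_apply,
      Submodule.Quotient.mk_eq_zero]
    exact ⟨ξ, congrArg Prod.snd hq⟩

variable (d c) in
noncomputable def cycleToSmulConeCycle : ker (d 0) →ₗ[R] ker (smulConeD0 A d c) :=
  LinearMap.codRestrict _ (LinearMap.inl R _ _ ∘ₗ Submodule.subtype _) fun ω => by simp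

@[simp]
theorem cycleToSmulConeCycle_apply (ω : ker (d 0)) :
    (cycleToSmulConeCycle d c ω : A 1 × A 0) = ((ω : A 1), 0) := rfl

variable (d c) in
noncomputable def homologyOneToSmulCone :
    homologyAt (d 1) (d 0) →ₗ[R] homologyAt (smulConeDSucc A d c 0) (smulConeD0 A d c) :=
  Submodule.mapQ _ _ (cycleToSmulConeCycle d c) <| by
    rintro ω ⟨ζ, hζ⟩
    exact ⟨(ζ, 0), by simpa using hζ⟩

theorem smulConeHomologyOne_smul_eq_zero
    (y : homologyAt (smulConeDSucc A d c 0) (smulConeD0 A d c)) : c • y = 0 := by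
  obtain ⟨z, rfl⟩ := Submodule.mkQ_surjective _ y
  rw [Submodule.mkQ_apply, ← Submodule.Quotient.mk_smul, Submodule.Quotient.mk_eq_zero]
  -- multiplication by `c` is null-homotopic on the cone: `c • (ω, η) = β (0, ω)`
  exact ⟨(0, z.1.1), Prod.ext (by simp) (by simp [(sub_eq_zero.mp z.2 : d 0 z.1.1 = c • z.1.2)])⟩

variable (d c) in
noncomputable def smulConeHomologyOneIncl :
    QuotSMulTop c (homologyAt (d 1) (d 0)) →ₗ[R]
      homologyAt (smulConeDSucc A d c 0) (smulConeD0 A d c) :=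
  Submodule.liftQ _ (homologyOneToSmulCone d c) <| by
    intro y hy
    obtain ⟨b, -, rfl⟩ := (Submodule.mem_smul_pointwise_iff_exists _ _ _).mp hy
    rw [LinearMap.mem_ker, map_smul, smulConeHomologyOne_smul_eq_zero]

theorem smulConeHomologyOneIncl_injective :
    Function.Injective (smulConeHomologyOneIncl d c) := by
  rw [← LinearMap.ker_eq_bot]
  refine Submodule.ker_liftQ_eq_bot _ _ _ fun y hy => ?_
  obtain ⟨ω, rfl⟩ := Submodule.mkQ_surjective _ y
  obtain ⟨⟨ζ, ξ⟩, hq⟩ := (Submodule.Quotient.mk_eq_zero _).mp hy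
  simp only [smulConeDSucc_zero_apply, Submodule.subtype_apply, cycleToSmulConeCycle_apply,
    Prod.ext_iff] at hq
  refine (Submodule.mem_smul_pointwise_iff_exists _ _ _).mpr
    ⟨Submodule.Quotient.mk ⟨ξ, hq.2⟩, trivial, ?_⟩
  rw [← Submodule.Quotient.mk_smul, Submodule.mkQ_apply, Submodule.Quotient.eq]
  refine ⟨-ζ, ?_⟩
  simp [← hq.1]

theorem smulConeHomologyOneProj_surjective :
    Function.Surjective (smulConeHomologyOneProj d c) := by
  rintro ⟨t, ht⟩
  obtain ⟨a, rfl⟩ := Submodule.mkQ_surjective _ t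
  rw [Submodule.mem_torsionBy_iff, Submodule.mkQ_apply, ← Submodule.Quotient.mk_smul,
    Submodule.Quotient.mk_eq_zero] at ht
  obtain ⟨ω, hω⟩ := ht
  exact ⟨Submodule.Quotient.mk ⟨(ω, a), by simp [hω]⟩, rfl⟩

theorem smulConeHomologyOne_exact :
    Function.Exact (smulConeHomologyOneIncl d c) (smulConeHomologyOneProj d c) := by
  rw [LinearMap.exact_iff]
  refine le_antisymm (fun y hy => ?_) ?_
  · obtain ⟨⟨⟨ω, η⟩, hz⟩, rfl⟩ := Submodule.mkQ_surjective _ y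
    have hz' : d 0 ω = c • η := sub_eq_zero.mp hz
    obtain ⟨ξ, rfl⟩ : η ∈ range (d 0) :=
      (Submodule.Quotient.mk_eq_zero _).mp (congrArg Subtype.val hy)
    refine ⟨Submodule.Quotient.mk (Submodule.Quotient.mk ⟨ω - c • ξ, by simp [hz']⟩), ?_⟩
    refine (Submodule.Quotient.eq _).mpr ⟨(0, -ξ), ?_⟩
    simp
  · rintro _ ⟨q, rfl⟩
    obtain ⟨y, rfl⟩ := Submodule.mkQ_surjective _ q
    obtain ⟨w, rfl⟩ := Submodule.mkQ_surjective _ y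
    exact Subtype.ext (Submodule.Quotient.mk_zero _)

theorem smulConeHomologyOneProj_injective (h : ker (d 0) ≤ range (d 1)) :
    Function.Injective (smulConeHomologyOneProj d c) := by
  have := (subsingleton_homologyAt_iff (d 1) (d 0)).mpr h
  rw [← LinearMap.ker_eq_bot, LinearMap.exact_iff.mp smulConeHomologyOne_exact,
    LinearMap.range_eq_bot]
  exact Subsingleton.elim _ _

noncomputable def smulConeHomologyOneEquiv (h : ker (d 0) ≤ range (d 1)) :
    homologyAt (smulConeDSucc A d c 0) (smulConeD0 A d c) ≃ₗ[R]
      Submodule.torsionBy R (A 0 ⧸ range (d 0)) c :=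
  .ofBijective _ ⟨smulConeHomologyOneProj_injective h, smulConeHomologyOneProj_surjective⟩

end SMulCone

section Transport

variable {R : Type*} [CommRing R] {M N : Type*} [AddCommGroup M] [Module R M]
  [AddCommGroup N] [Module R N]

theorem map_torsionBy_linearEquiv (e : M ≃ₗ[R] N) (c : R) :
    (Submodule.torsionBy R M c).map (e : M →ₗ[R] N) = Submodule.torsionBy R N c := by
  ext y
  rw [Submodule.mem_map_equiv, Submodule.mem_torsionBy_iff, Submodule.mem_torsionBy_iff,
    ← map_smul, LinearEquiv.map_eq_zero_iff]

noncomputable def torsionByCongr (e : M ≃ₗ[R] N) (c : R) :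
    Submodule.torsionBy R M c ≃ₗ[R] Submodule.torsionBy R N c :=
  e.ofSubmodules _ _ (map_torsionBy_linearEquiv e c)

noncomputable def torsionBySubmoduleEquiv (P : Submodule R M) (c : R) :
    Submodule.torsionBy R P c ≃ₗ[R] ↥(P ⊓ Submodule.torsionBy R M c) :=
  (LinearEquiv.ofEq _ _ (by ext; simp [Submodule.mem_torsionBy_iff, Subtype.ext_iff])).trans
    (Submodule.comapSubtypeEquivOfLe (inf_le_left : P ⊓ Submodule.torsionBy R M c ≤ P))

theorem ker_mulLeft_mk (I : Ideal R) (c : R) :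
    ker (LinearMap.mulLeft R (Ideal.Quotient.mk I c)) = Submodule.torsionBy R (R ⧸ I) c := by
  ext; simp [Submodule.mem_torsionBy_iff, Algebra.smul_def]

theorem comap_subtype_map_mulLeft_mk {I : Ideal R} (P : Submodule R (R ⧸ I)) (c : R) :
    (P.map (LinearMap.mulLeft R (Ideal.Quotient.mk I c))).comap P.subtype = c • ⊤ := by
  ext ⟨y, hy⟩
  simp [Submodule.mem_smul_pointwise_iff_exists, Algebra.smul_def, Subtype.ext_iff]

end Transport

theorem Function.Exact.nonempty_linearEquiv_prod {k R M N P : Type*} [Field k] [Ring R]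
    [Algebra k R] [AddCommGroup M] [Module R M] [Module k M] [IsScalarTower k R M]
    [AddCommGroup N] [Module R N] [Module k N] [IsScalarTower k R N]
    [AddCommGroup P] [Module R P] [Module k P] [IsScalarTower k R P]
    {f : M →ₗ[R] N} {g : N →ₗ[R] P} (hfg : Function.Exact f g) (hf : Function.Injective f)
    (hg : Function.Surjective g) : Nonempty (N ≃ₗ[k] M × P) := by
  obtain ⟨l, hl⟩ := (g.restrictScalars k).exists_rightInverse_of_surjective
    (LinearMap.range_eq_top.mpr hg)
  exact ⟨(Function.Exact.splitSurjectiveEquiv (f := f.restrictScalars k) (g := g.restrictScalars k)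
    hfg hf ⟨l, hl⟩).1⟩

abbrev SubsetBelow (n m j : ℕ) : Type :=
  {s : Finset (Fin n) // s.card = j ∧ ∀ i ∈ s, (i : ℕ) < m}

/-- `⋀ʲ Rᵐ`, viewed inside `⋀ʲ Rⁿ` as the span of the `e_S` with `S ⊆ {i | i < m}`. -/
abbrev KSpBelow (R : Type*) [CommRing R] (n m j : ℕ) : Type _ := SubsetBelow n m j → R

instance (n m : ℕ) : Unique (SubsetBelow n m 0) where
  default := ⟨∅, by simp⟩
  uniq t := Subtype.ext (Finset.card_eq_zero.mp t.2.1)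

instance (n : ℕ) : Unique {s : Finset (Fin n) // s.card = 0} where
  default := ⟨∅, rfl⟩
  uniq t := Subtype.ext (Finset.card_eq_zero.mp t.2)

namespace SubsetBelow

variable {n m j : ℕ}

@[simp]
theorem default_val : (default : SubsetBelow n m 0).1 = ∅ := rfl

theorem insert_spec (t : SubsetBelow n m j) {i : Fin n} (h : (i : ℕ) < m ∧ i ∉ t.1) :
    (insert i t.1).card = j + 1 ∧ ∀ a ∈ insert i t.1, (a : ℕ) < m := by
  refine ⟨by rw [Finset.card_insert_of_notMem h.2, t.2.1], fun a ha => ?_⟩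
  rcases Finset.mem_insert.mp ha with rfl | ha
  exacts [h.1, t.2.2 a ha]

abbrev castSucc (t : SubsetBelow n m j) : SubsetBelow n (m + 1) j :=
  ⟨t.1, t.2.1, fun i hi => Nat.lt_succ_of_lt (t.2.2 i hi)⟩

theorem top_notMem (hm : m < n) (t : SubsetBelow n m j) : (⟨m, hm⟩ : Fin n) ∉ t.1 :=
  fun h => lt_irrefl m (t.2.2 _ h)

abbrev insertTop (hm : m < n) (t : SubsetBelow n m j) : SubsetBelow n (m + 1) (j + 1) :=
  ⟨insert ⟨m, hm⟩ t.1, insert_spec t.castSucc ⟨Nat.lt_succ_self m, top_notMem hm t⟩⟩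

theorem eraseTop_spec (hm : m < n) (t : SubsetBelow n (m + 1) (j + 1))
    (h : (⟨m, hm⟩ : Fin n) ∈ t.1) :
    (t.1.erase ⟨m, hm⟩).card = j ∧ ∀ i ∈ t.1.erase ⟨m, hm⟩, (i : ℕ) < m := by
  refine ⟨by rw [Finset.card_erase_of_mem h, t.2.1]; rfl, fun i hi => ?_⟩
  obtain ⟨hne, hi⟩ := Finset.mem_erase.mp hi
  exact lt_of_le_of_ne (Nat.lt_succ_iff.mp (t.2.2 i hi)) fun he => hne (Fin.ext he)

theorem below_of_top_notMem (hm : m < n) (t : SubsetBelow n (m + 1) j)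
    (h : (⟨m, hm⟩ : Fin n) ∉ t.1) : t.1.card = j ∧ ∀ i ∈ t.1, (i : ℕ) < m := by
  refine ⟨t.2.1, fun i hi => lt_of_le_of_ne (Nat.lt_succ_iff.mp (t.2.2 i hi)) fun he => ?_⟩
  exact h (by rwa [show i = ⟨m, hm⟩ from Fin.ext he] at hi)

end SubsetBelow

section KoszulBelow

variable {R : Type*} [CommRing R] {n : ℕ}

noncomputable def koszulDBelow (x : Fin n → R) (m j : ℕ) :
    KSpBelow R n m (j + 1) →ₗ[R] KSpBelow R n m j where
  toFun ω t := ∑ i : Fin n,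
    if h : (i : ℕ) < m ∧ i ∉ t.1 then
      (-1 : R) ^ (t.1.filter (· < i)).card * x i * ω ⟨insert i t.1, t.insert_spec h⟩
    else 0
  map_add' ω η := funext fun t => by
    simp only [Pi.add_apply, ← Finset.sum_add_distrib]
    refine Finset.sum_congr rfl fun i _ => ?_
    split_ifs <;> ring
  map_smul' r ω := funext fun t => by
    simp only [Pi.smul_apply, RingHom.id_apply, smul_eq_mul, Finset.mul_sum]
    refine Finset.sum_congr rfl fun i _ => ?_
    split_ifs <;> ring

theorem koszulDBelow_apply (x : Fin n → R) (m j : ℕ) (ω : KSpBelow R n m (j + 1))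
    (t : SubsetBelow n m j) :
    koszulDBelow x m j ω t = ∑ i : Fin n,
      if h : (i : ℕ) < m ∧ i ∉ t.1 then
        (-1 : R) ^ (t.1.filter (· < i)).card * x i * ω ⟨insert i t.1, t.insert_spec h⟩
      else 0 := rfl

theorem map_range_koszulDBelow_zero (x : Fin n → R) (m : ℕ) :
    (range (koszulDBelow x m 0)).map (LinearEquiv.funUnique (SubsetBelow n m 0) R R).toLinearMap =
      Ideal.span (x '' {i | (i : ℕ) < m}) := by
  rw [← LinearMap.range_comp]
  refine le_antisymm ?_ (Ideal.span_le.mpr ?_)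
  · rintro _ ⟨ω, rfl⟩
    change koszulDBelow x m 0 ω default ∈ Ideal.span (x '' {i | (i : ℕ) < m})
    rw [koszulDBelow_apply]
    refine Ideal.sum_mem _ fun i _ => ?_
    split_ifs with h
    · exact Ideal.mul_mem_right _ _ (Ideal.mul_mem_left _ _ (Ideal.subset_span ⟨i, h.1, rfl⟩))
    · exact Ideal.zero_mem _
  · rintro _ ⟨i, hi : (i : ℕ) < m, rfl⟩
    refine ⟨Pi.single ⟨{i}, by simpa using hi⟩ 1, ?_⟩
    change koszulDBelow x m 0 _ default = x i
    rw [koszulDBelow_apply, Finset.sum_eq_single i]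
    · simp [hi]
    · intro b _ hb
      simp [Subtype.ext_iff, hb]
    · simp

end KoszulBelow

section KoszulBelowCone

variable {R : Type*} [CommRing R] {n m : ℕ}

/-- Splitting the basis vectors `e_S` according to whether `m ∈ S` exhibits the Koszul complex of
`x 0, …, x m` as the mapping cone of multiplication by `x m` on that of `x 0, …, x (m - 1)`;
the sign on the second component matches the sign `(-1) ^ (j + 2)` in `smulConeDSucc`. -/
noncomputable def koszulBelowSuccEquiv (hm : m < n) (j : ℕ) :
    KSpBelow R n (m + 1) (j + 1) ≃ₗ[R] KSpBelow R n m (j + 1) × KSpBelow R n m j where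
  toFun ω := (fun t => ω t.castSucc, fun t => -ω (t.insertTop hm))
  invFun p t :=
    if h : (⟨m, hm⟩ : Fin n) ∈ t.1 then -p.2 ⟨t.1.erase ⟨m, hm⟩, t.eraseTop_spec hm h⟩
    else p.1 ⟨t.1, t.below_of_top_notMem hm h⟩
  map_add' ω η := Prod.ext rfl (funext fun t => neg_add _ _)
  map_smul' r ω := Prod.ext rfl (funext fun t => (smul_neg r _).symm)
  left_inv ω := funext fun t => by
    by_cases h : (⟨m, hm⟩ : Fin n) ∈ t.1
    · simp only [dif_pos h, neg_neg]
      exact congrArg ω (Subtype.ext (Finset.insert_erase h))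
    · simp only [dif_neg h]
  right_inv p := by
    refine Prod.ext (funext fun t => dif_neg (t.top_notMem hm)) (funext fun t => ?_)
    dsimp only
    rw [dif_pos (Finset.mem_insert_self _ _), neg_neg]
    exact congrArg p.2 (Subtype.ext (Finset.erase_insert (t.top_notMem hm)))

@[simp]
theorem koszulBelowSuccEquiv_apply (hm : m < n) (j : ℕ) (ω : KSpBelow R n (m + 1) (j + 1)) :
    koszulBelowSuccEquiv hm j ω = (fun t => ω t.castSucc, fun t => -ω (t.insertTop hm)) := rfl

noncomputable def koszulBelowSuccEquivZero (R : Type*) [CommRing R] (n m : ℕ) :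
    KSpBelow R n (m + 1) 0 ≃ₗ[R] KSpBelow R n m 0 :=
  (LinearEquiv.funUnique _ R R).trans (LinearEquiv.funUnique _ R R).symm

theorem koszulDBelow_succ_castSucc (x : Fin n → R) (hm : m < n) (j : ℕ)
    (ω : KSpBelow R n (m + 1) (j + 1)) (t : SubsetBelow n m j) :
    koszulDBelow x (m + 1) j ω t.castSucc =
      koszulDBelow x m j (fun s => ω s.castSucc) t + (-1) ^ j * x ⟨m, hm⟩ * ω (t.insertTop hm) := by
  -- only the term `i = m` differs, with sign `(-1) ^ j` since all of `t` lies below `m`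
  have hfm := t.top_notMem hm
  rw [koszulDBelow_apply, koszulDBelow_apply, ← sub_eq_iff_eq_add', ← Finset.sum_sub_distrib]
  refine (Finset.sum_eq_single (⟨m, hm⟩ : Fin n) (fun b _ hb => ?_) (by simp)).trans ?_
  · have hbm : (b : ℕ) ≠ m := fun h => hb (Fin.ext h)
    by_cases hbt : b ∈ t.1
    · rw [dif_neg (fun hc => hc.2 hbt), dif_neg (fun hc => hc.2 hbt), sub_self]
    · by_cases hbm' : (b : ℕ) < m
      · rw [dif_pos ⟨Nat.lt_succ_of_lt hbm', hbt⟩, dif_pos ⟨hbm', hbt⟩]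
        exact sub_eq_zero_of_eq rfl
      · rw [dif_neg (fun hc => hbm' (lt_of_le_of_ne (Nat.lt_succ_iff.mp hc.1) hbm)),
          dif_neg (fun hc => hbm' hc.1), sub_self]
  · rw [dif_pos ⟨Nat.lt_succ_self m, hfm⟩, dif_neg (fun hc => lt_irrefl m hc.1), sub_zero,
      Finset.filter_true_of_mem fun i hi => Fin.lt_def.mpr (t.2.2 i hi), t.2.1]

theorem koszulDBelow_succ_insertTop (x : Fin n → R) (hm : m < n) (j : ℕ)
    (ω : KSpBelow R n (m + 1) (j + 2)) (t : SubsetBelow n m j) :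
    koszulDBelow x (m + 1) (j + 1) ω (t.insertTop hm) =
      koszulDBelow x m j (fun s => ω (s.insertTop hm)) t := by
  -- `m` exceeds every index `i < m`, so inserting it changes no sign
  rw [koszulDBelow_apply, koszulDBelow_apply]
  refine Finset.sum_congr rfl fun i _ => ?_
  by_cases him : (i : ℕ) < m
  · have hifm : i ≠ ⟨m, hm⟩ := fun he => (Nat.ne_of_lt him) (congrArg Fin.val he)
    by_cases hit : i ∈ t.1
    · rw [dif_neg (fun hc => hc.2 (Finset.mem_insert_of_mem hit)), dif_neg (fun hc => hc.2 hit)]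
    · rw [dif_pos ⟨Nat.lt_succ_of_lt him, by simp [hifm, hit]⟩, dif_pos ⟨him, hit⟩]
      have hfil : (insert (⟨m, hm⟩ : Fin n) t.1).filter (· < i) = t.1.filter (· < i) := by
        rw [Finset.filter_insert, if_neg]
        exact fun hlt => Nat.not_lt.mpr (Nat.le_of_lt him) (Fin.lt_def.mp hlt)
      simp only [hfil, Finset.insert_comm i ⟨m, hm⟩ t.1]
  · rw [dif_neg fun hc => him (lt_of_le_of_ne (Nat.lt_succ_iff.mp hc.1)
        fun he => hc.2 (Finset.mem_insert.mpr (Or.inl (Fin.ext he)))),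
      dif_neg fun hc => him hc.1]

end KoszulBelowCone

def IsRegularInit {R : Type*} [CommRing R] {n : ℕ} (x : Fin n → R) : Prop :=
  ∀ i : Fin n, (i : ℕ) < n - 1 → ∀ r : R,
    r * x i ∈ Ideal.span (x '' {j : Fin n | (j : ℕ) < (i : ℕ)}) →
    r ∈ Ideal.span (x '' {j : Fin n | (j : ℕ) < (i : ℕ)})

section KoszulBelowExact

variable {R : Type*} [CommRing R] {n m : ℕ}

theorem koszulBelowSuccEquiv_comm (x : Fin n → R) (hm : m < n) (j : ℕ)
    (ω : KSpBelow R n (m + 1) (j + 2)) :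
    koszulBelowSuccEquiv hm j (koszulDBelow x (m + 1) (j + 1) ω) =
      smulConeDSucc (KSpBelow R n m) (koszulDBelow x m) (x ⟨m, hm⟩) j
        (koszulBelowSuccEquiv hm (j + 1) ω) := by
  refine Prod.ext (funext fun t => ?_) (funext fun t => ?_)
  · simp only [koszulBelowSuccEquiv_apply, smulConeDSucc_apply, Pi.add_apply, Pi.smul_apply,
      smul_eq_mul, koszulDBelow_succ_castSucc x hm]
    ring
  · simp only [koszulBelowSuccEquiv_apply, smulConeDSucc_apply, koszulDBelow_succ_insertTop]
    exact congrFun (map_neg (koszulDBelow x m j) fun s => ω (s.insertTop hm)).symm t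

theorem koszulBelowSuccEquivZero_comm (x : Fin n → R) (hm : m < n)
    (ω : KSpBelow R n (m + 1) 1) :
    koszulBelowSuccEquivZero R n m (koszulDBelow x (m + 1) 0 ω) =
      smulConeD0 (KSpBelow R n m) (koszulDBelow x m) (x ⟨m, hm⟩)
        (koszulBelowSuccEquiv hm 0 ω) := by
  funext t
  have ht : (default : SubsetBelow n (m + 1) 0) = t.castSucc := Subsingleton.elim _ _
  change koszulDBelow x (m + 1) 0 ω default = _
  simp [ht, koszulDBelow_succ_castSucc x hm]

theorem mem_range_koszulDBelow_zero_iff (x : Fin n → R) (m : ℕ) (a : KSpBelow R n m 0) :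
    a ∈ range (koszulDBelow x m 0) ↔ a default ∈ Ideal.span (x '' {i | (i : ℕ) < m}) := by
  conv_lhs => rw [← (LinearEquiv.funUnique (SubsetBelow n m 0) R R).symm_apply_apply a]
  rw [← Submodule.mem_map_equiv, map_range_koszulDBelow_zero]
  rfl

theorem koszulDBelow_ker_le_range (x : Fin n → R) (hreg : IsRegularInit x) :
    ∀ m ≤ n - 1, ∀ j, ker (koszulDBelow x m j) ≤ range (koszulDBelow x m (j + 1)) := by
  intro m
  induction m with
  | zero =>
    intro _ j a _
    have : IsEmpty (SubsetBelow n 0 (j + 1)) := ⟨fun t => by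
      obtain ⟨i, hi⟩ := Finset.card_pos.mp (by rw [t.2.1]; omega)
      exact Nat.not_lt_zero _ (t.2.2 i hi)⟩
    exact ⟨0, Subsingleton.elim _ _⟩
  | succ m ih =>
    intro hm1 j
    have hm : m < n := by omega
    have hex := ih (by omega)
    have hregm (a : KSpBelow R n m 0)
        (ha : x ⟨m, hm⟩ • a ∈ range (koszulDBelow x m 0)) : a ∈ range (koszulDBelow x m 0) := by
      rw [mem_range_koszulDBelow_zero_iff] at ha ⊢
      exact hreg ⟨m, hm⟩ (by simp; omega) _ (by rw [mul_comm]; exact ha)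
    cases j with
    | zero =>
      refine (ker_le_range_iff_of_linearEquiv (koszulBelowSuccEquiv hm 1)
        (koszulBelowSuccEquiv hm 0) (koszulBelowSuccEquivZero R n m)
        (koszulBelowSuccEquiv_comm x hm 0) (koszulBelowSuccEquivZero_comm x hm)).mpr ?_
      exact smulConeD0_ker_le_range (hex 0) hregm
    | succ j =>
      refine (ker_le_range_iff_of_linearEquiv (koszulBelowSuccEquiv hm (j + 2))
        (koszulBelowSuccEquiv hm (j + 1)) (koszulBelowSuccEquiv hm j)
        (koszulBelowSuccEquiv_comm x hm (j + 1)) (koszulBelowSuccEquiv_comm x hm j)).mpr ?_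
      exact smulConeDSucc_ker_le_range (hex j) (hex (j + 1))

end KoszulBelowExact

section Koszul

variable {R : Type*} [CommRing R] {n : ℕ}

theorem koszulD_apply (x : Fin n → R) (j : ℕ) (ω : KSp R n (j + 1))
    (t : {s : Finset (Fin n) // s.card = j}) :
    koszulD x j ω t = ∑ i : Fin n,
      if h : i ∈ t.1 then 0
      else (-1 : R) ^ (t.1.filter (· < i)).card * x i *
        ω ⟨insert i t.1, by rw [Finset.card_insert_of_notMem h, t.2]⟩ := rfl

noncomputable def kSpBelowEquivKSp (R : Type*) [CommRing R] {n m : ℕ} (hm : n ≤ m) (j : ℕ) :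
    KSpBelow R n m j ≃ₗ[R] KSp R n j where
  toFun ω t := ω ⟨t.1, t.2, fun i _ => lt_of_lt_of_le i.isLt hm⟩
  invFun ω t := ω ⟨t.1, t.2.1⟩
  map_add' _ _ := rfl
  map_smul' _ _ := rfl
  left_inv _ := rfl
  right_inv _ := rfl

theorem kSpBelowEquivKSp_comm (x : Fin n → R) {m : ℕ} (hm : n ≤ m) (j : ℕ)
    (ω : KSpBelow R n m (j + 1)) :
    kSpBelowEquivKSp R hm j (koszulDBelow x m j ω) =
      koszulD x j (kSpBelowEquivKSp R hm (j + 1) ω) := by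
  funext t
  rw [koszulD_apply]
  change koszulDBelow x m j ω _ = _
  rw [koszulDBelow_apply]
  refine Finset.sum_congr rfl fun i _ => ?_
  by_cases hi : i ∈ t.1
  · rw [dif_neg (by simp [hi]), dif_pos hi]
  · rw [dif_pos ⟨lt_of_lt_of_le i.isLt hm, hi⟩, dif_neg hi]
    rfl

theorem map_range_koszulD_zero (x : Fin n → R) :
    (range (koszulD x 0)).map
        (LinearEquiv.funUnique {s : Finset (Fin n) // s.card = 0} R R).toLinearMap =
      Ideal.span (Set.range x) := by
  have hx : x '' {i | (i : ℕ) < n} = Set.range x := by simp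
  ext r
  rw [Submodule.mem_map_equiv, ← hx, ← map_range_koszulDBelow_zero, Submodule.mem_map_equiv]
  set e := kSpBelowEquivKSp R (le_refl n)
  constructor
  · rintro ⟨ω, hω⟩
    refine ⟨(e 1).symm ω, (e 0).injective ?_⟩
    rw [kSpBelowEquivKSp_comm, LinearEquiv.apply_symm_apply, hω]
    rfl
  · rintro ⟨ω, hω⟩
    refine ⟨e 1 ω, ?_⟩
    rw [← kSpBelowEquivKSp_comm, hω]
    rfl

noncomputable def koszulConeEquiv (R : Type*) [CommRing R] (hn : 0 < n) (j : ℕ) :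
    KSp R n (j + 1) ≃ₗ[R] KSpBelow R n (n - 1) (j + 1) × KSpBelow R n (n - 1) j :=
  (kSpBelowEquivKSp R (m := n - 1 + 1) (by omega) (j + 1)).symm.trans
    (koszulBelowSuccEquiv (Nat.sub_lt hn one_pos) j)

noncomputable def koszulConeEquivZero (R : Type*) [CommRing R] (n : ℕ) :
    KSp R n 0 ≃ₗ[R] KSpBelow R n (n - 1) 0 :=
  (LinearEquiv.funUnique _ R R).trans (LinearEquiv.funUnique _ R R).symm

theorem koszulConeEquiv_comm (x : Fin n → R) (hn : 0 < n) (j : ℕ) (ω : KSp R n (j + 2)) :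
    koszulConeEquiv R hn j (koszulD x (j + 1) ω) =
      smulConeDSucc (KSpBelow R n (n - 1)) (koszulDBelow x (n - 1))
        (x ⟨n - 1, Nat.sub_lt hn one_pos⟩) j (koszulConeEquiv R hn (j + 1) ω) := by
  simp only [koszulConeEquiv, LinearEquiv.trans_apply]
  rw [← koszulBelowSuccEquiv_comm]
  congr 1
  rw [LinearEquiv.symm_apply_eq, kSpBelowEquivKSp_comm, LinearEquiv.apply_symm_apply]

theorem koszulConeEquivZero_comm (x : Fin n → R) (hn : 0 < n) (ω : KSp R n 1) :
    koszulConeEquivZero R n (koszulD x 0 ω) =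
      smulConeD0 (KSpBelow R n (n - 1)) (koszulDBelow x (n - 1)) (x ⟨n - 1, Nat.sub_lt hn one_pos⟩)
        (koszulConeEquiv R hn 0 ω) := by
  set e := kSpBelowEquivKSp R (n := n) (m := n - 1 + 1) (by omega)
  rw [← (e 1).apply_symm_apply ω, ← kSpBelowEquivKSp_comm]
  exact koszulBelowSuccEquivZero_comm x (Nat.sub_lt hn one_pos) ((e 1).symm ω)

end Koszul

section KoszulHomology

variable {R : Type*} [CommRing R] {n : ℕ} (x : Fin n → R)

theorem koszulD_ker_le_range (hn : 0 < n) (hreg : IsRegularInit x) (j : ℕ) :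
    ker (koszulD x (j + 1)) ≤ range (koszulD x (j + 2)) := by
  have hK := koszulDBelow_ker_le_range x hreg (n - 1) le_rfl
  refine (ker_le_range_iff_of_linearEquiv (koszulConeEquiv R hn (j + 2))
    (koszulConeEquiv R hn (j + 1)) (koszulConeEquiv R hn j) (koszulConeEquiv_comm x hn (j + 1))
    (koszulConeEquiv_comm x hn j)).mpr ?_
  exact smulConeDSucc_ker_le_range (hK j) (hK (j + 1))

noncomputable def koszulBelowHomologyZeroEquiv (m : ℕ) :
    (KSpBelow R n m 0 ⧸ range (koszulDBelow x m 0)) ≃ₗ[R] R ⧸ Ideal.span (x '' {i | (i : ℕ) < m}) :=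
  Submodule.Quotient.equiv _ _ (LinearEquiv.funUnique _ R R) (map_range_koszulDBelow_zero x m)

noncomputable def koszulHomologyZeroEquiv :
    (KSp R n 0 ⧸ range (koszulD x 0)) ≃ₗ[R] R ⧸ Ideal.span (Set.range x) :=
  Submodule.Quotient.equiv _ _ (LinearEquiv.funUnique _ R R) (map_range_koszulD_zero x)

noncomputable def koszulHomologyOneEquiv (hn : 0 < n) (hreg : IsRegularInit x) :
    homologyAt (koszulD x 1) (koszulD x 0) ≃ₗ[R]
      Submodule.torsionBy R (R ⧸ Ideal.span (x '' {i | (i : ℕ) < n - 1}))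
        (x ⟨n - 1, Nat.sub_lt hn one_pos⟩) :=
  (homologyAtCongr (koszulConeEquiv R hn 1) (koszulConeEquiv R hn 0) (koszulConeEquivZero R n)
      (koszulConeEquiv_comm x hn 0) (koszulConeEquivZero_comm x hn)).trans <|
    (smulConeHomologyOneEquiv (koszulDBelow_ker_le_range x hreg (n - 1) le_rfl 0)).trans
      (torsionByCongr (koszulBelowHomologyZeroEquiv x (n - 1)) _)

theorem coneD0_eq_smulConeD0 (c : R) : coneD0 x c = smulConeD0 (KSp R n) (koszulD x) c := rfl

theorem coneDsucc_eq_smulConeDSucc (c : R) :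
    coneDsucc x c = smulConeDSucc (KSp R n) (koszulD x) c := rfl

noncomputable def koszulSmulConeHomologyZeroEquiv (c : R) :
    (KSp R n 0 ⧸ range (smulConeD0 (KSp R n) (koszulD x) c)) ≃ₗ[R]
      R ⧸ (Ideal.span (Set.range x) ⊔ Ideal.span {c}) :=
  Submodule.Quotient.equiv _ _ (LinearEquiv.funUnique _ R R) <| by
    rw [range_smulConeD0, Submodule.map_sup, map_range_koszulD_zero, Submodule.map_pointwise_smul,
      Submodule.map_top, LinearEquiv.range, ← Submodule.ideal_span_singleton_smul,
      Ideal.smul_eq_mul, Ideal.mul_top]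

end KoszulHomology

/-- Homology of the mapping cone `𝓑` of `·c : K(x) → K(x)`:
(i) `H_k(𝓑) = 0` for `k ≥ 3`;
(ii) `H_2(𝓑) ≅ ann_{B'}(xₙ) ∩ ann_{B'}(c)` as `R`-modules;
(iii) `H_1(𝓑) ≅ ann_{B'}(xₙ)/(c·ann_{B'}(xₙ)) ⊕ ann_B(c)` as `k`-vector spaces;
(iv) `H_0(𝓑) ≅ B/(c)`. -/
theorem mapping_cone_homology
    (k : Type*) [Field k] {R : Type*} [CommRing R] [Algebra k R]
    (n : ℕ) (hn : 2 ≤ n) (x : Fin n → R) (c : R)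
    (hreg : ∀ i : Fin n, (i : ℕ) < n - 1 → ∀ r : R,
      r * x i ∈ Ideal.span (x '' {j : Fin n | (j : ℕ) < (i : ℕ)}) →
      r ∈ Ideal.span (x '' {j : Fin n | (j : ℕ) < (i : ℕ)})) :
    -- (i) `H_k(𝓑) = 0` for `k = (j+1) + 2 ≥ 3`
    (∀ j : ℕ, 1 ≤ j → ∀ p : KSp R n (j + 2) × KSp R n (j + 1), coneDsucc x c j p = 0 →
      ∃ q : KSp R n (j + 3) × KSp R n (j + 2), coneDsucc x c (j + 1) q = p) ∧
    -- (ii) `H_2(𝓑) ≅ ann_{B'}(xₙ) ⊓ ann_{B'}(c)`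
    Nonempty ((↥(LinearMap.ker (coneDsucc x c 0)) ⧸
        (LinearMap.range (coneDsucc x c 1)).comap (LinearMap.ker (coneDsucc x c 0)).subtype)
      ≃ₗ[R]
      ↥(LinearMap.ker (LinearMap.mulLeft R
          (Ideal.Quotient.mk (Ideal.span (x '' {j : Fin n | (j : ℕ) < n - 1}))
            (x ⟨n - 1, Nat.sub_lt (Nat.lt_of_lt_of_le Nat.zero_lt_two hn) Nat.one_pos⟩))) ⊓
        LinearMap.ker (LinearMap.mulLeft R
          (Ideal.Quotient.mk (Ideal.span (x '' {j : Fin n | (j : ℕ) < n - 1})) c)))) ∧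
    -- (iii) `H_1(𝓑) ≅ ann_{B'}(xₙ)/(c·ann_{B'}(xₙ)) ⊕ ann_B(c)` as `k`-vector spaces
    Nonempty ((↥(LinearMap.ker (coneD0 x c)) ⧸
        (LinearMap.range (coneDsucc x c 0)).comap (LinearMap.ker (coneD0 x c)).subtype)
      ≃ₗ[k]
      ((↥(LinearMap.ker (LinearMap.mulLeft R
            (Ideal.Quotient.mk (Ideal.span (x '' {j : Fin n | (j : ℕ) < n - 1}))
              (x ⟨n - 1, Nat.sub_lt (Nat.lt_of_lt_of_le Nat.zero_lt_two hn) Nat.one_pos⟩)))) ⧸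
          (Submodule.map
            (LinearMap.mulLeft R
              (Ideal.Quotient.mk (Ideal.span (x '' {j : Fin n | (j : ℕ) < n - 1})) c))
            (LinearMap.ker (LinearMap.mulLeft R
              (Ideal.Quotient.mk (Ideal.span (x '' {j : Fin n | (j : ℕ) < n - 1}))
                (x ⟨n - 1, Nat.sub_lt (Nat.lt_of_lt_of_le Nat.zero_lt_two hn) Nat.one_pos⟩))))).comap
            (LinearMap.ker (LinearMap.mulLeft R
              (Ideal.Quotient.mk (Ideal.span (x '' {j : Fin n | (j : ℕ) < n - 1}))
                (x ⟨n - 1, Nat.sub_lt (Nat.lt_of_lt_of_le Nat.zero_lt_two hn) Nat.one_pos⟩)))).subtype) ×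
        ↥(LinearMap.ker (LinearMap.mulLeft R
            (Ideal.Quotient.mk (Ideal.span (Set.range x)) c))))) ∧
    -- (iv) `H_0(𝓑) ≅ B/(c)`
    Nonempty ((KSp R n 0 ⧸ LinearMap.range (coneD0 x c)) ≃ₗ[R]
      R ⧸ (Ideal.span (Set.range x) ⊔ Ideal.span {c})) := by
  have hn₀ : 0 < n := by omega
  rw [coneD0_eq_smulConeD0, coneDsucc_eq_smulConeDSucc, ker_mulLeft_mk, ker_mulLeft_mk,
    ker_mulLeft_mk, comap_subtype_map_mulLeft_mk]
  refine ⟨fun j hj p hp => ?_, ?_, ?_, ?_⟩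
  · obtain ⟨j, rfl⟩ := Nat.exists_eq_add_of_le' hj
    exact smulConeDSucc_ker_le_range (koszulD_ker_le_range x hn₀ hreg j)
      (koszulD_ker_le_range x hn₀ hreg (j + 1)) hp
  · exact ⟨(smulConeHomologyTwoEquiv (koszulD_ker_le_range x hn₀ hreg 0)).trans <|
      (torsionByCongr (koszulHomologyOneEquiv x hn₀ hreg) c).trans (torsionBySubmoduleEquiv _ c)⟩
  · obtain ⟨e⟩ := Function.Exact.nonempty_linearEquiv_prod (k := k)
      (smulConeHomologyOne_exact (A := KSp R n) (d := koszulD x) (c := c))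
      smulConeHomologyOneIncl_injective smulConeHomologyOneProj_surjective
    exact ⟨e.trans (((QuotSMulTop.congr c (koszulHomologyOneEquiv x hn₀ hreg)).prodCongr
      (torsionByCongr (koszulHomologyZeroEquiv x) c)).restrictScalars k)⟩
  · exact ⟨koszulSmulConeHomologyZeroEquiv x c⟩
end

section
/- Multiplication by f induces a well-defined R-module isomorphism from (I : f)/(I + (c)) onto (fR ∩ I)/(fI + R·(cf)), sending the class of g to the class of gf. -/
/-!
Since `f` is a non-zerodivisor, `g ↦ g * f` is already an isomorphism `(I : f) ≃ fR ∩ I`.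
Multiplication by `f` is injective and maps `I + (c)` onto `fI + (cf)`, so this isomorphism
carries `(I + (c)) ∩ (I : f)` onto `(fI + (cf)) ∩ fR ∩ I` and descends to the quotients.
-/

namespace Submodule

variable {R M M' : Type*} [CommRing R] [AddCommGroup M] [Module R M] [AddCommGroup M']
  [Module R M']

theorem map_comap_subtype_eq_comap_subtype_map {μ : M →ₗ[R] M'} (hμ : Function.Injective μ)
    {p : Submodule R M} {q : Submodule R M'} (e : p ≃ₗ[R] q) (he : ∀ x, (e x : M') = μ x)
    (J : Submodule R M) :
    (J.comap p.subtype).map (e : p →ₗ[R] q) = (J.map μ).comap q.subtype := by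
  ext y
  obtain ⟨x, rfl⟩ := e.surjective y
  simp [he, hμ.eq_iff]

end Submodule

theorem LinearMap.mulRight_injective_of_mem_nonZeroDivisorsRight {R : Type*} [CommRing R] {f : R}
    (hf : f ∈ nonZeroDivisorsRight R) : Function.Injective (LinearMap.mulRight R f) :=
  (injective_iff_map_eq_zero _).mpr hf

namespace Ideal

variable {R : Type*} [CommRing R]

theorem mul_mem_span_singleton_inf_of_mem_colon {I : Ideal R} {f g : R}
    (hg : g ∈ I.colon (span {f})) : g * f ∈ span {f} ⊓ I :=
  ⟨mem_span_singleton.mpr (dvd_mul_left f g),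
    by simpa [mul_comm] using mem_colon_span_singleton.mp hg⟩

theorem map_mulRight_sup_span_singleton (I : Ideal R) (f c : R) :
    Submodule.map (LinearMap.mulRight R f) (I ⊔ span {c}) =
      Submodule.map (LinearMap.mulLeft R f) I ⊔ span {c * f} := by
  have hμ : LinearMap.mulRight R f = LinearMap.mulLeft R f := LinearMap.ext fun x => mul_comm x f
  rw [Submodule.map_sup, span, Submodule.map_span, Set.image_singleton, LinearMap.mulRight_apply,
    hμ]

noncomputable def colonSpanSingletonEquiv (I : Ideal R) {f : R}
    (hf : f ∈ nonZeroDivisorsRight R) : I.colon (span {f}) ≃ₗ[R] ↥(span {f} ⊓ I) :=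
  .ofBijective ((LinearMap.mulRight R f).restrict fun _ => mul_mem_span_singleton_inf_of_mem_colon)
    ⟨fun _ _ h => Subtype.ext (LinearMap.mulRight_injective_of_mem_nonZeroDivisorsRight hf
      (congrArg Subtype.val h)), by
      rintro ⟨_, hfa, hI⟩
      obtain ⟨a, rfl⟩ := mem_span_singleton'.mp hfa
      exact ⟨⟨a, mem_colon_span_singleton.mpr (by simpa [mul_comm] using hI)⟩, rfl⟩⟩

end Ideal

open Ideal in
/-- If `f` is a non-zerodivisor and `c·f ∈ I`, multiplication by `f`
induces an `R`-module isomorphism `(I : f)/(I + (c)) ≅ (fR ∩ I)/(fI + R·(cf))`,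
sending the class of `g` to the class of `g·f`. -/
theorem mul_f_iso_colon_quotient {R : Type*} [CommRing R] (I : Ideal R) (f c : R)
    (hf : ∀ a : R, a * f = 0 → a = 0) :
    ∃ e : (↥(I.colon (Ideal.span {f})) ⧸
        (Submodule.comap (I.colon (Ideal.span {f})).subtype (I ⊔ Ideal.span {c}))) ≃ₗ[R]
      (↥(Ideal.span {f} ⊓ I) ⧸
        (Submodule.comap (Ideal.span {f} ⊓ I).subtype
          (Submodule.map (LinearMap.mulLeft R f) I ⊔ Ideal.span {c * f}))),
      ∀ g : ↥(I.colon (Ideal.span {f})),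
        e (Submodule.Quotient.mk g) =
          Submodule.Quotient.mk ⟨g.1 * f, by
            refine Submodule.mem_inf.mpr ⟨?_, ?_⟩
            · exact Ideal.mem_span_singleton.mpr (Dvd.intro_left _ rfl)
            · simpa [smul_eq_mul] using
                Submodule.mem_colon.mp g.2 f (Submodule.mem_span_singleton_self f)⟩ := by
  refine ⟨Submodule.Quotient.equiv _ _ (colonSpanSingletonEquiv I hf) ?_, fun g => rfl⟩
  rw [Submodule.map_comap_subtype_eq_comap_subtype_map
    (LinearMap.mulRight_injective_of_mem_nonZeroDivisorsRight hf) _ fun _ => rfl,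
    map_mulRight_sup_span_singleton]
end

section
/- If h ∈ R satisfies h·X_n ∈ I_{n−1} and h ∈ (f, f_n), then there exists ω = (ω_1,…,ω_n) ∈ R^n such that ω_n = h, Σ_{i=1}^n ω_i X_i = 0, and ω ∈ f·R^n + R·(f_1,…,f_n) (i.e. ω = f·v + s·(f_1,…,f_n) for some v ∈ R^n and s ∈ R). -/
/-!
Write `h = a f + b fₙ`. Multiplying by `Xₙ` and using the tangency relation,
`(a Xₙ + b c) f = h Xₙ + b Σ_{i<n} Xᵢ fᵢ ∈ I_{n−1}`, so `a Xₙ + b c = Σ_{i<n} lᵢ Xᵢ` because `f` is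
regular modulo `I_{n−1}`. With `v = (−l₁, …, −l_{n−1}, a)` we get `Σ vᵢ Xᵢ = −b c`, and
`ω = f v + b (f₁, …, fₙ)` has `ωₙ = h` and `Σ ωᵢ Xᵢ = −b c f + b c f = 0`.
-/

open Finset

section

variable {R ι : Type*} [CommRing R] [Fintype ι]

theorem exists_sum_mul_eq_of_mem_span_image_compl {X : ι → R} {k : ι} {y : R}
    (hy : y ∈ Ideal.span (X '' {k}ᶜ)) : ∃ l : ι → R, l k = 0 ∧ ∑ i, l i * X i = y := by
  obtain ⟨l, hl, rfl⟩ := (Finsupp.mem_span_image_iff_linearCombination R).mp hy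
  refine ⟨l, (Finsupp.mem_supported' R l).mp hl k (by simp), ?_⟩
  rw [Finsupp.linearCombination_apply, Finsupp.sum_fintype _ _ (by simp)]
  simp only [smul_eq_mul]

theorem sum_compl_mul_mem_span_image_compl [DecidableEq ι] (X g : ι → R) (k : ι) :
    ∑ i ∈ {k}ᶜ, X i * g i ∈ Ideal.span (X '' {k}ᶜ) :=
  Ideal.sum_mem _ fun i hi =>
    Ideal.mul_mem_right _ _ (Ideal.subset_span ⟨i, by simpa using hi, rfl⟩)

theorem exists_syzygy_of_tangent (k : ι) {X fd : ι → R} {f c h : R}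
    (htan : ∑ i, X i * fd i = c * f)
    (hreg : ∀ r : R, r * f ∈ Ideal.span (X '' {k}ᶜ) → r ∈ Ideal.span (X '' {k}ᶜ))
    (hX : h * X k ∈ Ideal.span (X '' {k}ᶜ)) (hfn : h ∈ Ideal.span ({f, fd k} : Set R)) :
    ∃ ω : ι → R, ω k = h ∧ ∑ i, ω i * X i = 0 ∧
      ∃ (v : ι → R) (s : R), ω = f • v + s • fd := by
  classical
  obtain ⟨a, b, rfl⟩ := Ideal.mem_span_pair.mp hfn
  have hcf : c * f = X k * fd k + ∑ i ∈ {k}ᶜ, X i * fd i :=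
    htan ▸ Fintype.sum_eq_add_sum_compl k _
  have hmem : (a * X k + b * c) * f ∈ Ideal.span (X '' {k}ᶜ) := by
    have hsplit : (a * X k + b * c) * f =
        (a * f + b * fd k) * X k + b * ∑ i ∈ {k}ᶜ, X i * fd i := by
      linear_combination b * hcf
    rw [hsplit]
    exact add_mem hX (Ideal.mul_mem_left _ _ (sum_compl_mul_mem_span_image_compl X fd k))
  obtain ⟨l, hlk, hl⟩ := exists_sum_mul_eq_of_mem_span_image_compl (hreg _ hmem)
  set v : ι → R := Pi.single k a - l
  have hv : ∑ i, v i * X i = -(b * c) := by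
    simp only [v, Pi.sub_apply, sub_mul, sum_sub_distrib, hl, Pi.single_apply, ite_mul,
      zero_mul, sum_ite_eq', mem_univ, if_true]
    ring
  refine ⟨f • v + b • fd, ?_, ?_, v, b, rfl⟩
  · simp [v, hlk, mul_comm]
  · calc ∑ i, (f • v + b • fd) i * X i = f * ∑ i, v i * X i + b * ∑ i, X i * fd i := by
          simp only [Pi.add_apply, Pi.smul_apply, smul_eq_mul, mul_sum, ← sum_add_distrib]
          exact sum_congr rfl fun i _ => by ring
      _ = 0 := by rw [hv, htan]; ring

end

theorem Fin.setOf_val_lt_sub_one {n : ℕ} (h : n - 1 < n) :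
    {j : Fin n | (j : ℕ) < n - 1} = {⟨n - 1, h⟩}ᶜ := by
  ext j
  simp only [Set.mem_ofPred_eq, Set.mem_compl_iff, Set.mem_singleton_iff, Fin.ext_iff]
  omega

/-- If `Σ Xᵢ fᵢ = c·f`, `f` is a non-zerodivisor modulo
`I_{n−1} = (X_1,…,X_{n−1})`, `h·Xₙ ∈ I_{n−1}` and `h ∈ (f, fₙ)`, then there is a
syzygy `ω` of `X` with last entry `h` lying in `f·Rⁿ + R·(f_1,…,f_n)`. -/
theorem syzygy_lift_of_tangent {R : Type*} [CommRing R] (n : ℕ) (hn : 2 ≤ n)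
    (X : Fin n → R) (f : R) (fd : Fin n → R) (c : R)
    (htan : ∑ i, X i * fd i = c * f)
    (hreg : ∀ r : R, r * f ∈ Ideal.span (X '' {j : Fin n | (j : ℕ) < n - 1}) →
      r ∈ Ideal.span (X '' {j : Fin n | (j : ℕ) < n - 1}))
    (h : R)
    (hX : h * X ⟨n - 1, Nat.sub_lt (Nat.lt_of_lt_of_le Nat.zero_lt_two hn) Nat.one_pos⟩ ∈
      Ideal.span (X '' {j : Fin n | (j : ℕ) < n - 1}))
    (hfn : h ∈ Ideal.span
      ({f, fd ⟨n - 1, Nat.sub_lt (Nat.lt_of_lt_of_le Nat.zero_lt_two hn) Nat.one_pos⟩} :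
        Set R)) :
    ∃ ω : Fin n → R,
      ω ⟨n - 1, Nat.sub_lt (Nat.lt_of_lt_of_le Nat.zero_lt_two hn) Nat.one_pos⟩ = h ∧
      ∑ i, ω i * X i = 0 ∧
      ∃ (v : Fin n → R) (s : R), ω = f • v + s • fd := by
  rw [Fin.setOf_val_lt_sub_one (by omega)] at hreg hX
  exact exists_syzygy_of_tangent _ htan hreg hX hfn
end

section
/- In R = ℂ[[x,y]], the set {g ∈ R : g·f ∈ (X_1, X_2)} equals the principal ideal (x^m), where f = x²y + y^{k−1}, X_1 = ((k−2)/(2(k−1)))·x^{m+1} and X_2 = (1/(k−1))·x^m·y; equivalently, the ideal quotient (x^{m+1}, x^m y) : (x²y + y^{k−1}) equals (x^m). -/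
/-!
Every generator of `(X₁, X₂)` is a multiple of `x^m`, and `x^m f = xy · x^{m+1} + y^{k-2} · x^m y`
lies in `(X₁, X₂)` because both coefficients are nonzero for `k ≥ 3`. Conversely, `x` is prime in
`ℂ[[x,y]]` (the order in `x` is additive on products) and does not divide `f` because of the term
`y^{k-1}`, so `x^m ∣ g f` forces `x^m ∣ g`.
-/

open MvPowerSeries Finsupp

namespace MvPowerSeries

variable {σ R : Type*}

theorem X_pow_dvd_iff_le_weightedOrder [Semiring R] [DecidableEq σ] {s : σ} {n : ℕ}
    {φ : MvPowerSeries σ R} : X s ^ n ∣ φ ↔ (n : ℕ∞) ≤ φ.weightedOrder (Pi.single s 1) := by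
  rw [X_pow_dvd_iff]
  refine ⟨fun h ↦ nat_le_weightedOrder _ fun d hd ↦ h d ?_, fun h d hd ↦
    coeff_eq_zero_of_lt_weightedOrder _ (lt_of_lt_of_le ?_ h)⟩
  · rwa [weight_single_one_apply] at hd
  · rw [weight_single_one_apply]
    exact_mod_cast hd

theorem prime_X [CommSemiring R] [NoZeroDivisors R] [Nontrivial R] (s : σ) :
    Prime (X s : MvPowerSeries σ R) := by
  classical
  refine ⟨nonZeroDivisors.ne_zero X_mem_nonzeroDivisors, fun h ↦ ?_, fun a b hab ↦ ?_⟩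
  · simpa using h.map constantCoeff
  · rw [← pow_one (X s)] at hab ⊢
    simp only [X_pow_dvd_iff_le_weightedOrder, weightedOrder_mul, Nat.cast_one,
      Order.one_le_iff_ne_zero, ne_eq, add_eq_zero, not_and_or] at hab ⊢
    exact hab

theorem not_X_dvd_X_pow [Semiring R] [Nontrivial R] {s t : σ} (hst : s ≠ t) (n : ℕ) :
    ¬ X s ∣ (X t ^ n : MvPowerSeries σ R) := by
  classical
  rw [X_dvd_iff]
  intro h
  simpa [coeff_X_pow] using h (single t n) (by simp [hst.symm])

end MvPowerSeries

theorem Ideal.colon_span_singleton_eq_span_pow {R : Type*} [CommRing R] [IsDomain R]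
    {I : Ideal R} {p f : R} {n : ℕ} (hp : Prime p) (hpf : ¬ p ∣ f) (hI : I ≤ span {p ^ n})
    (hmem : p ^ n * f ∈ I) : I.colon (span {f} : Ideal R) = span {p ^ n} := by
  ext g
  rw [mem_colon_span_singleton, mem_span_singleton]
  refine ⟨fun hg ↦ hp.pow_dvd_of_dvd_mul_right n hpf (mem_span_singleton.1 (hI hg)), ?_⟩
  rintro ⟨h, rfl⟩
  simpa [mul_right_comm] using I.mul_mem_right h hmem

theorem Dk_colon_ideal_general (k m : ℕ) (hk : 4 ≤ k) :
    (Ideal.span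
        ({MvPowerSeries.C (σ := Fin 2) (R := ℂ) (((k : ℂ) - 2) / (2 * ((k : ℂ) - 1))) *
            MvPowerSeries.X 0 ^ (m + 1),
          MvPowerSeries.C (σ := Fin 2) (R := ℂ) (1 / ((k : ℂ) - 1)) *
            (MvPowerSeries.X 0 ^ m * MvPowerSeries.X 1)} :
          Set (MvPowerSeries (Fin 2) ℂ))).colon
      ((Ideal.span {MvPowerSeries.X 0 ^ 2 * MvPowerSeries.X 1 +
        MvPowerSeries.X 1 ^ (k - 1)} : Ideal (MvPowerSeries (Fin 2) ℂ)) : Set (MvPowerSeries (Fin 2) ℂ)) =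
    Ideal.span {MvPowerSeries.X 0 ^ m} := by
  have : IsDomain (MvPowerSeries (Fin 2) ℂ) := NoZeroDivisors.to_isDomain _
  set x : MvPowerSeries (Fin 2) ℂ := X 0
  set y : MvPowerSeries (Fin 2) ℂ := X 1
  set c₁ : ℂ := ((k : ℂ) - 2) / (2 * ((k : ℂ) - 1))
  set c₂ : ℂ := 1 / ((k : ℂ) - 1)
  have hc₁ : c₁ ≠ 0 :=
    div_ne_zero (sub_ne_zero.2 (by exact_mod_cast (by omega : k ≠ 2)))
      (mul_ne_zero two_ne_zero (sub_ne_zero.2 (by exact_mod_cast (by omega : k ≠ 1))))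
  have hc₂ : c₂ ≠ 0 :=
    one_div_ne_zero (sub_ne_zero.2 (by exact_mod_cast (by omega : k ≠ 1)))
  refine Ideal.colon_span_singleton_eq_span_pow (prime_X 0) ?_ ?_ ?_
  · rw [dvd_add_right (dvd_mul_of_dvd_left (dvd_pow_self x two_ne_zero) y)]
    exact not_X_dvd_X_pow (by decide) _
  · rw [Ideal.span_le, Set.insert_subset_iff, Set.singleton_subset_iff]
    exact ⟨Ideal.mem_span_singleton.2 ((pow_dvd_pow x m.le_succ).mul_left _),
      Ideal.mem_span_singleton.2 ((dvd_mul_right _ y).mul_left _)⟩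
  · rw [Ideal.mem_span_pair]
    refine ⟨C c₁⁻¹ * (x * y), C c₂⁻¹ * y ^ (k - 2), ?_⟩
    have e₁ := congrArg (C (σ := Fin 2)) (inv_mul_cancel₀ hc₁)
    have e₂ := congrArg (C (σ := Fin 2)) (inv_mul_cancel₀ hc₂)
    rw [map_mul, map_one] at e₁ e₂
    rw [show k - 1 = k - 2 + 1 by omega]
    linear_combination (x ^ (m + 2) * y) * e₁ + (x ^ m * y ^ (k - 2) * y) * e₂

/-- In `R = ℂ[[x,y]]`, for the `D_k` singularity
`f = x²y + y^{k−1}` and the tangent vector field with components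
`X₁ = ((k−2)/(2(k−1)))·x^{m+1}`, `X₂ = (1/(k−1))·x^m y`, one has
`{g : g·f ∈ (X₁, X₂)} = (x^m)`, i.e. `(X₁, X₂) : f = (x^m)`. -/
theorem Dk_colon_ideal (k m : ℕ) (hk : 4 ≤ k) (hm : 2 ≤ m) :
    (Ideal.span
        ({MvPowerSeries.C (σ := Fin 2) (R := ℂ) (((k : ℂ) - 2) / (2 * ((k : ℂ) - 1))) *
            MvPowerSeries.X 0 ^ (m + 1),
          MvPowerSeries.C (σ := Fin 2) (R := ℂ) (1 / ((k : ℂ) - 1)) *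
            (MvPowerSeries.X 0 ^ m * MvPowerSeries.X 1)} :
          Set (MvPowerSeries (Fin 2) ℂ))).colon
      ((Ideal.span {MvPowerSeries.X 0 ^ 2 * MvPowerSeries.X 1 +
        MvPowerSeries.X 1 ^ (k - 1)} : Ideal (MvPowerSeries (Fin 2) ℂ)) : Set (MvPowerSeries (Fin 2) ℂ)) =
    Ideal.span {MvPowerSeries.X 0 ^ m} :=
  Dk_colon_ideal_general k m hk
end

section
/- dim_ℂ ℂ[[x,y]]/(x^{m+1}, x²y + y^{k−1}) = (k−1)(m+1). -/
/-! The monomials `x^i y^j` with `i ≤ m`, `j < b := k - 1` form a basis of the quotient.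
They span it: `x^{m+1} = 0` and `y^b = -x²y` there, so `y` is nilpotent, every power series is
congruent to a polynomial, and the span of these monomials is stable under multiplication by
`x` and `y`. They are independent: a combination `P` of them lying in the ideal is
`u x^{m+1} + v (y^b + x · xy)`; as `P` has `y`-degree `< b`, comparing coefficients one power
of `x` at a time gives `x^{m+1} ∣ v`, so `x^{m+1} ∣ P` and hence `P = 0`. -/

open MvPowerSeries

namespace MvPowerSeries

variable {σ R : Type*}

theorem mem_span_X_pow_pair_of_coeff_eq_zero [CommRing R] {s t : σ} {a b : ℕ}
    {φ : MvPowerSeries σ R} (h : ∀ d, d s < a → d t < b → coeff d φ = 0) :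
    φ ∈ Ideal.span {X s ^ a, X t ^ b} := by
  classical
  let φ₁ : MvPowerSeries σ R := fun d => if a ≤ d s then coeff d φ else 0
  have hcoeff (d) : coeff d φ₁ = if a ≤ d s then coeff d φ else 0 := rfl
  have hφ₁ : X s ^ a ∣ φ₁ := X_pow_dvd_iff.2 fun d hd => if_neg (by omega)
  have hφ₂ : X t ^ b ∣ φ - φ₁ := X_pow_dvd_iff.2 fun d hd => by
    by_cases hs : a ≤ d s
    · simp [hcoeff, hs]
    · simp [hcoeff, hs, h d (by omega) hd]
  obtain ⟨u, hu⟩ := hφ₁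
  obtain ⟨v, hv⟩ := hφ₂
  exact Ideal.mem_span_pair.2 ⟨u, v, by linear_combination -hu - hv⟩

theorem X_pow_dvd_of_mem_span_pair [CommSemiring R] {s t : σ} (hst : s ≠ t) {n b : ℕ}
    {h P : MvPowerSeries σ R} (hP : P ∈ Ideal.span {X s ^ n, X t ^ b + X s * h})
    (hdeg : ∀ d, b ≤ d t → coeff d P = 0) : X s ^ n ∣ P := by
  classical
  obtain ⟨u, v, rfl⟩ := Ideal.mem_span_pair.1 hP
  suffices hv : X s ^ n ∣ v from dvd_add (dvd_mul_left _ _) (hv.mul_right _)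
  suffices ∀ j ≤ n, X s ^ j ∣ v from this n le_rfl
  have step : ∀ j < n, X s ^ j ∣ v → X s ^ (j + 1) ∣ v := by
    rintro j hj ⟨w, rfl⟩
    -- at `d + δ` the coefficient of `P` is `coeff d w`, every other term having `X s`-order > j
    rw [pow_succ]
    refine mul_dvd_mul_left _ (X_dvd_iff.2 fun d hd => ?_)
    set δ := Finsupp.single s j + Finsupp.single t b
    have hmon : (X s ^ j * X t ^ b : MvPowerSeries σ R) = monomial δ 1 := by
      rw [X_pow_eq, X_pow_eq, monomial_mul_monomial, one_mul]
    have hδs : (d + δ) s = j := by simp [δ, hd, Finsupp.single_eq_of_ne hst]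
    have hP := hdeg (d + δ) (by simp only [δ, Finsupp.add_apply, Finsupp.single_eq_same]; omega)
    rw [show u * X s ^ n + X s ^ j * w * (X t ^ b + X s * h) =
        u * X s ^ n + X s ^ (j + 1) * (w * h) + w * monomial δ 1 by rw [← hmon]; ring,
      map_add, map_add, X_pow_dvd_iff.1 (dvd_mul_left _ _) _ (by omega),
      X_pow_dvd_iff.1 (dvd_mul_right _ _) _ (by omega), coeff_mul_monomial,
      if_pos le_add_self, add_tsub_cancel_right, mul_one, zero_add, zero_add] at hP
    exact hP
  intro j hj
  induction j with
  | zero => simp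
  | succ j ih => exact step j (by omega) (ih (by omega))

theorem coeff_X_zero_pow_mul_X_one_pow [CommSemiring R] (d : Fin 2 →₀ ℕ) (i j : ℕ) :
    coeff d (X 0 ^ i * X 1 ^ j : MvPowerSeries (Fin 2) R) =
      if d 0 = i ∧ d 1 = j then 1 else 0 := by
  simp [X_pow_eq, monomial_mul_monomial, coeff_monomial, Finsupp.ext_iff, Fin.forall_fin_two]

theorem mk_eq_mk_trunc' [CommRing R] {I : Ideal (MvPowerSeries (Fin 2) R)} {n : Fin 2 →₀ ℕ}
    (h₀ : X 0 ^ (n 0 + 1) ∈ I) (h₁ : X 1 ^ (n 1 + 1) ∈ I) (φ : MvPowerSeries (Fin 2) R) :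
    Ideal.Quotient.mk I φ = Ideal.Quotient.mk I (trunc' R n φ) := by
  refine Ideal.Quotient.eq.2 (Ideal.span_le.2 ?_
    (mem_span_X_pow_pair_of_coeff_eq_zero (s := 0) (t := 1) (a := n 0 + 1) (b := n 1 + 1) ?_))
  · simp [Set.insert_subset_iff, h₀, h₁]
  · intro d hd₀ hd₁
    have hd : d ≤ n := Finsupp.le_def.2 (Fin.forall_fin_two.2 ⟨by omega, by omega⟩)
    simp [coeff_trunc', hd]

end MvPowerSeries

section DkExample

variable (K : Type*) [Field K] (m b : ℕ)

noncomputable def dkIdeal : Ideal (MvPowerSeries (Fin 2) K) :=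
  Ideal.span {X 0 ^ (m + 1), X 0 ^ 2 * X 1 + X 1 ^ b}

noncomputable def dkMonomial (p : Fin (m + 1) × Fin b) :
    MvPowerSeries (Fin 2) K ⧸ dkIdeal K m b :=
  Ideal.Quotient.mk _ (X 0 ^ (p.1 : ℕ) * X 1 ^ (p.2 : ℕ))

variable {K m b}

theorem X_zero_pow_mem_dkIdeal : X 0 ^ (m + 1) ∈ dkIdeal K m b :=
  Ideal.subset_span (Set.mem_insert _ _)

theorem X_zero_sq_mul_X_one_add_X_one_pow_mem_dkIdeal :
    X 0 ^ 2 * X 1 + X 1 ^ b ∈ dkIdeal K m b :=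
  Ideal.subset_span (Set.mem_insert_of_mem _ rfl)

theorem mk_X_zero_pow_mul_X_one_pow_eq_zero {i : ℕ} (hi : m < i) (j : ℕ) :
    Ideal.Quotient.mk (dkIdeal K m b) (X 0 ^ i * X 1 ^ j) = 0 := by
  rw [Ideal.Quotient.eq_zero_iff_mem, ← Nat.add_sub_of_le hi, pow_add, mul_assoc]
  exact Ideal.mul_mem_right _ _ X_zero_pow_mem_dkIdeal

theorem mk_X_zero_pow_mul_X_one_pow_eq_neg (i : ℕ) :
    Ideal.Quotient.mk (dkIdeal K m b) (X 0 ^ i * X 1 ^ b) =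
      -Ideal.Quotient.mk (dkIdeal K m b) (X 0 ^ (i + 2) * X 1 ^ 1) := by
  rw [eq_neg_iff_add_eq_zero, ← map_add, Ideal.Quotient.eq_zero_iff_mem]
  convert Ideal.mul_mem_left _ (X 0 ^ i : MvPowerSeries (Fin 2) K)
    X_zero_sq_mul_X_one_add_X_one_pow_mem_dkIdeal using 1
  ring

theorem X_one_pow_mem_dkIdeal : X 1 ^ (b * (m + 1)) ∈ dkIdeal K m b := by
  have hrel : Ideal.Quotient.mk (dkIdeal K m b) (X 1 ^ b) =
      Ideal.Quotient.mk (dkIdeal K m b) (-(X 0 ^ 2 * X 1)) := by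
    simpa using mk_X_zero_pow_mul_X_one_pow_eq_neg (K := K) (m := m) (b := b) 0
  rw [← Ideal.Quotient.eq_zero_iff_mem, pow_mul, map_pow, hrel, ← map_pow,
    Ideal.Quotient.eq_zero_iff_mem,
    show (-(X 0 ^ 2 * X 1) : MvPowerSeries (Fin 2) K) ^ (m + 1) =
      X 0 ^ (m + 1) * ((-1) ^ (m + 1) * X 0 ^ (m + 1) * X 1 ^ (m + 1)) by ring]
  exact Ideal.mul_mem_right _ _ X_zero_pow_mem_dkIdeal

open Submodule Set

theorem mk_X_zero_pow_mul_X_one_pow_mem_span_dkMonomial (i : ℕ) {j : ℕ} (hj : j < b) :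
    Ideal.Quotient.mk (dkIdeal K m b) (X 0 ^ i * X 1 ^ j) ∈
      span K (range (dkMonomial K m b)) := by
  by_cases hi : i ≤ m
  · exact subset_span ⟨(⟨i, by omega⟩, ⟨j, hj⟩), rfl⟩
  · rw [mk_X_zero_pow_mul_X_one_pow_eq_zero (by omega)]
    exact zero_mem _

theorem mul_mk_X_mem_span_dkMonomial (hb : 2 ≤ b) {q : MvPowerSeries (Fin 2) K ⧸ dkIdeal K m b}
    (hq : q ∈ span K (range (dkMonomial K m b))) (i : Fin 2) :
    q * Ideal.Quotient.mk _ (X i) ∈ span K (range (dkMonomial K m b)) := by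
  induction hq using Submodule.span_induction with
  | mem q hq =>
    obtain ⟨⟨i', j⟩, rfl⟩ := hq
    rw [dkMonomial, ← map_mul]
    obtain rfl | rfl : i = 0 ∨ i = 1 := by fin_cases i <;> simp
    · rw [show (X 0 ^ (i' : ℕ) * X 1 ^ (j : ℕ) * X 0 : MvPowerSeries (Fin 2) K) =
        X 0 ^ ((i' : ℕ) + 1) * X 1 ^ (j : ℕ) by ring]
      exact mk_X_zero_pow_mul_X_one_pow_mem_span_dkMonomial _ j.2
    · rw [show (X 0 ^ (i' : ℕ) * X 1 ^ (j : ℕ) * X 1 : MvPowerSeries (Fin 2) K) =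
        X 0 ^ (i' : ℕ) * X 1 ^ ((j : ℕ) + 1) by ring]
      rcases (show (j : ℕ) + 1 < b ∨ (j : ℕ) + 1 = b by omega) with hj | hj
      · exact mk_X_zero_pow_mul_X_one_pow_mem_span_dkMonomial _ hj
      · rw [hj, mk_X_zero_pow_mul_X_one_pow_eq_neg]
        exact neg_mem (mk_X_zero_pow_mul_X_one_pow_mem_span_dkMonomial _ (by omega))
  | zero => simp
  | add x y _ _ hx hy => rw [add_mul]; exact add_mem hx hy
  | smul a x _ hx => rw [smul_mul_assoc]; exact smul_mem _ a hx

theorem mk_coe_mem_span_dkMonomial (hb : 2 ≤ b) (p : MvPolynomial (Fin 2) K) :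
    Ideal.Quotient.mk (dkIdeal K m b) (p : MvPowerSeries (Fin 2) K) ∈
      span K (range (dkMonomial K m b)) := by
  induction p using MvPolynomial.induction_on with
  | C a =>
    have h1 : dkMonomial K m b (0, ⟨0, by omega⟩) = 1 := by simp [dkMonomial]
    rw [MvPolynomial.coe_C, c_eq_algebraMap, Ideal.Quotient.mk_algebraMap,
      Algebra.algebraMap_eq_smul_one, ← h1]
    exact smul_mem _ a (subset_span (mem_range_self _))
  | add p q hp hq => rw [MvPolynomial.coe_add, map_add]; exact add_mem hp hq
  | mul_X p i hp =>
    rw [MvPolynomial.coe_mul, MvPolynomial.coe_X, map_mul]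
    exact mul_mk_X_mem_span_dkMonomial hb hp i

theorem span_dkMonomial_eq_top (hb : 2 ≤ b) : span K (range (dkMonomial K m b)) = ⊤ := by
  refine eq_top_iff'.2 fun q => ?_
  obtain ⟨φ, rfl⟩ := Ideal.Quotient.mk_surjective q
  rw [mk_eq_mk_trunc' (n := Finsupp.single 0 m + Finsupp.single 1 (b * (m + 1)))
    (by simpa using X_zero_pow_mem_dkIdeal)
    (by simpa using Ideal.pow_mem_of_pow_mem _ X_one_pow_mem_dkIdeal (Nat.le_succ _))]
  exact mk_coe_mem_span_dkMonomial hb _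

theorem linearIndependent_dkMonomial : LinearIndependent K (dkMonomial K m b) := by
  classical
  rw [linearIndependent_iff']
  intro s g hg i hi
  set P : MvPowerSeries (Fin 2) K := ∑ p ∈ s, g p • (X 0 ^ (p.1 : ℕ) * X 1 ^ (p.2 : ℕ))
  have hcoeff (d : Fin 2 →₀ ℕ) :
      coeff d P = ∑ p ∈ s, if d 0 = p.1 ∧ d 1 = p.2 then g p else 0 := by
    simp [P, coeff_X_zero_pow_mul_X_one_pow]
  have hP : P ∈ dkIdeal K m b := by
    rw [← Ideal.Quotient.eq_zero_iff_mem, ← hg, ← Ideal.Quotient.mkₐ_eq_mk K, map_sum]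
    simp only [map_smul, dkMonomial, Ideal.Quotient.mkₐ_eq_mk]
  have hdvd : X 0 ^ (m + 1) ∣ P := by
    refine X_pow_dvd_of_mem_span_pair (t := 1) (b := b) (h := X 0 * X 1) (by decide) ?_
      fun d hd => ?_
    · rwa [dkIdeal, show (X 0 ^ 2 * X 1 + X 1 ^ b : MvPowerSeries (Fin 2) K) =
        X 1 ^ b + X 0 * (X 0 * X 1) by ring] at hP
    · rw [hcoeff]
      exact Finset.sum_eq_zero fun p _ => if_neg fun h => by omega
  have := X_pow_dvd_iff.1 hdvd (Finsupp.single 0 (i.1 : ℕ) + Finsupp.single 1 (i.2 : ℕ))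
    (by simp; omega)
  rw [hcoeff, Finset.sum_eq_single i] at this
  · simpa using this
  · intro p _ hpi
    refine if_neg fun h => hpi ?_
    simp only [Finsupp.add_apply, Finsupp.single_eq_same, Finsupp.single_eq_of_ne,
      ne_eq, zero_ne_one, one_ne_zero, not_false_eq_true, add_zero, zero_add] at h
    exact Prod.ext (Fin.ext h.1.symm) (Fin.ext h.2.symm)
  · exact fun h => (h hi).elim

theorem finrank_quotient_dkIdeal (hb : 2 ≤ b) :
    Module.finrank K (MvPowerSeries (Fin 2) K ⧸ dkIdeal K m b) = (m + 1) * b := by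
  rw [Module.finrank_eq_card_basis
    (Module.Basis.mk linearIndependent_dkMonomial (span_dkMonomial_eq_top hb).ge)]
  simp

end DkExample

theorem Dk_dim_X1_f_general (k m : ℕ) (hk : 4 ≤ k) :
    Module.finrank ℂ
      (MvPowerSeries (Fin 2) ℂ ⧸
        Ideal.span ({MvPowerSeries.X 0 ^ (m + 1),
          MvPowerSeries.X 0 ^ 2 * MvPowerSeries.X 1 + MvPowerSeries.X 1 ^ (k - 1)} :
          Set (MvPowerSeries (Fin 2) ℂ))) = (k - 1) * (m + 1) :=
  (finrank_quotient_dkIdeal (by omega)).trans (mul_comm _ _)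

/-- `dim_ℂ ℂ[[x,y]]/(x^{m+1}, x²y + y^{k−1}) = (k−1)(m+1)`. -/
theorem Dk_dim_X1_f (k m : ℕ) (hk : 4 ≤ k) (hm : 2 ≤ m) :
    Module.finrank ℂ
      (MvPowerSeries (Fin 2) ℂ ⧸
        Ideal.span ({MvPowerSeries.X 0 ^ (m + 1),
          MvPowerSeries.X 0 ^ 2 * MvPowerSeries.X 1 + MvPowerSeries.X 1 ^ (k - 1)} :
          Set (MvPowerSeries (Fin 2) ℂ))) = (k - 1) * (m + 1) :=
  Dk_dim_X1_f_general k m hk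
end

section
/- dim_ℂ ℂ[[x,y]]/(x^{m+1}, x^m y, x²y + y^{k−1}) = m(k−1) + 1. -/
/-!
Write `x, y` for the images of the variables in the quotient `Q` and `K = k - 2`, so that
`y ^ (K + 1) = -x ^ 2 * y`, `x ^ m * y = 0` and `x ^ (m + 1) = 0` in `Q`. Iterating the first
relation gives `y ^ (q * K + 1) = (-x ^ 2) ^ q * y`, so `y` is nilpotent and `Q` is spanned by the
images of monomials; trading `x ^ a * y ^ b` (`b > K`) for `-x ^ (a + 2) * y ^ (b - K)` shows that
`x ^ m` and the `x ^ a * y ^ b` with `a < m`, `b ≤ K` already span, which are `m * (K + 1) + 1`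
elements. They are independent because the coefficient of `x ^ a * y ^ b` in the reduced form of a
series is a linear functional on the whole power series ring vanishing on the ideal.
-/

open Module Submodule MvPowerSeries

theorem finrank_quotient_eq_card_of_dual {F A ι : Type*} [Field F] [CommRing A] [Algebra F A]
    [Fintype ι] [DecidableEq ι] (I : Ideal A) (v : ι → A)
    (hspan : ⊤ ≤ span F (Set.range (Ideal.Quotient.mk I ∘ v)))
    (Φ : A →ₗ[F] ι → F) (hI : ∀ a ∈ I, Φ a = 0) (hΦ : ∀ i, Φ (v i) = Pi.single i 1) :
    finrank F (A ⧸ I) = Fintype.card ι := by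
  let Ψ : A ⧸ I →ₗ[F] ι → F :=
    (I.restrictScalars F).liftQ Φ hI ∘ₗ (Submodule.Quotient.restrictScalarsEquiv F I).symm
  have hind : LinearIndependent F (Ideal.Quotient.mk I ∘ v) := by
    refine LinearIndependent.of_comp Ψ ?_
    convert (Pi.basisFun F ι).linearIndependent using 1
    ext1 i
    exact (hΦ i).trans (Pi.basisFun_apply F ι i).symm
  exact finrank_eq_card_basis (Basis.mk hind hspan)

theorem pow_mul_add_one_eq_neg_sq_pow_mul {A : Type*} [CommRing A] {x y : A} {K : ℕ}
    (h : x ^ 2 * y + y ^ (K + 1) = 0) (q : ℕ) : y ^ (q * K + 1) = (-x ^ 2) ^ q * y := by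
  induction q with
  | zero => simp
  | succ q ih =>
    calc y ^ ((q + 1) * K + 1) = y ^ (K + 1) * y ^ (q * K) := by ring
      _ = -x ^ 2 * y ^ (q * K + 1) := by rw [eq_neg_of_add_eq_zero_right h]; ring
      _ = (-x ^ 2) ^ (q + 1) * y := by rw [ih]; ring

namespace DkQuotient

def basisExps (m K : ℕ) : Finset (ℕ × ℕ) := insert (m, 0) (Finset.range m ×ˢ Finset.range (K + 1))

theorem mem_basisExps {m K a b : ℕ} :
    (a, b) ∈ basisExps m K ↔ a = m ∧ b = 0 ∨ a < m ∧ b ≤ K := by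
  simp [basisExps]

theorem snd_le_of_mem_basisExps {m K : ℕ} {p : ℕ × ℕ} (hp : p ∈ basisExps m K) : p.2 ≤ K := by
  have := mem_basisExps.1 hp
  omega

theorem card_basisExps (m K : ℕ) : (basisExps m K).card = m * (K + 1) + 1 := by
  simp [basisExps]

theorem pow_mul_pow_mem_span_basisExps {F Q : Type*} [Field F] [CommRing Q] [Algebra F Q]
    {m K : ℕ} (hK : 1 ≤ K) {x y : Q} (hx : x ^ (m + 1) = 0) (hxy : x ^ m * y = 0)
    (h : x ^ 2 * y + y ^ (K + 1) = 0) (a b : ℕ) :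
    x ^ a * y ^ b ∈ span F (Set.range fun p : basisExps m K => x ^ p.1.1 * y ^ p.1.2) := by
  have mem : ∀ {a b}, (a, b) ∈ basisExps m K →
      x ^ a * y ^ b ∈ span F (Set.range fun p : basisExps m K => x ^ p.1.1 * y ^ p.1.2) :=
    fun hp => subset_span ⟨⟨_, hp⟩, rfl⟩
  induction b using Nat.strong_induction_on generalizing a with
  | _ b ih =>
  obtain rfl | hb0 := Nat.eq_zero_or_pos b
  · obtain ha | rfl | ha := lt_trichotomy a m
    · exact mem (mem_basisExps.2 (Or.inr ⟨ha, Nat.zero_le K⟩))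
    · exact mem (mem_basisExps.2 (Or.inl ⟨rfl, rfl⟩))
    · rw [← Nat.sub_add_cancel ha, pow_add, hx, mul_zero, zero_mul]
      exact zero_mem _
  obtain hbK | hbK := le_or_gt b K
  · obtain ha | ha := lt_or_ge a m
    · exact mem (mem_basisExps.2 (Or.inr ⟨ha, hbK⟩))
    · have : x ^ a * y ^ b = x ^ (a - m) * y ^ (b - 1) * (x ^ m * y) := by
        rw [mul_mul_mul_comm, ← pow_add, ← pow_succ, Nat.sub_add_cancel ha,
          Nat.sub_add_cancel hb0]
      rw [this, hxy, mul_zero]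
      exact zero_mem _
  · have : x ^ a * y ^ b = -(x ^ (a + 2) * y ^ (b - K)) := by
      obtain ⟨c, rfl⟩ := Nat.exists_eq_add_of_lt hbK
      rw [show K + c + 1 - K = c + 1 by omega, show K + c + 1 = c + (K + 1) by ring, pow_add,
        eq_neg_of_add_eq_zero_right h]
      ring
    rw [this]
    exact neg_mem (ih _ (by omega) _)

noncomputable def bideg (a b : ℕ) : Fin 2 →₀ ℕ := Finsupp.single 0 a + Finsupp.single 1 b

@[simp] theorem bideg_apply_zero (a b : ℕ) : bideg a b 0 = a := by simp [bideg]

@[simp] theorem bideg_apply_one (a b : ℕ) : bideg a b 1 = b := by simp [bideg]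

theorem eq_bideg (d : Fin 2 →₀ ℕ) : d = bideg (d 0) (d 1) := by
  ext i; fin_cases i <;> simp

theorem bideg_inj {a b c e : ℕ} : bideg a b = bideg c e ↔ a = c ∧ b = e := by
  refine ⟨fun h => ⟨by simpa using congr($h 0), by simpa using congr($h 1)⟩, ?_⟩
  rintro ⟨rfl, rfl⟩; rfl

theorem bideg_le_iff {a b : ℕ} {d : Fin 2 →₀ ℕ} : bideg a b ≤ d ↔ a ≤ d 0 ∧ b ≤ d 1 := by
  simp [Finsupp.le_def, Fin.forall_fin_two]

theorem le_bideg_iff {a b : ℕ} {d : Fin 2 →₀ ℕ} : d ≤ bideg a b ↔ d 0 ≤ a ∧ d 1 ≤ b := by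
  simp [Finsupp.le_def, Fin.forall_fin_two]

theorem bideg_sub_bideg (a b i j : ℕ) : bideg a b - bideg i j = bideg (a - i) (b - j) := by
  ext k; fin_cases k <;> simp

section CommSemiring

variable {R : Type*} [CommSemiring R]

theorem monomial_bideg_one (a b : ℕ) :
    monomial (bideg a b) (1 : R) = X 0 ^ a * X 1 ^ b := by
  rw [X_pow_eq, X_pow_eq, monomial_mul_monomial, one_mul]; rfl

theorem coeff_bideg_X_pow_mul_X_pow (a b i j : ℕ) :
    coeff (bideg a b) (X 0 ^ i * X 1 ^ j : MvPowerSeries (Fin 2) R) =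
      if a = i ∧ b = j then 1 else 0 := by
  rw [← monomial_bideg_one, coeff_monomial]
  simp only [bideg_inj]

theorem coeff_bideg_mul_X_pow_mul_X_pow (g : MvPowerSeries (Fin 2) R) (a b i j : ℕ) :
    coeff (bideg a b) (g * (X 0 ^ i * X 1 ^ j)) =
      if i ≤ a ∧ j ≤ b then coeff (bideg (a - i) (b - j)) g else 0 := by
  rw [mul_comm, ← monomial_bideg_one, coeff_monomial_mul, one_mul, bideg_sub_bideg]
  simp only [bideg_le_iff, bideg_apply_zero, bideg_apply_one]

end CommSemiring

theorem sub_trunc'_mem_span_X_pow {R : Type*} [CommRing R] (f : MvPowerSeries (Fin 2) R)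
    (M N : ℕ) :
    f - trunc' R (bideg M N) f ∈ Ideal.span {X 0 ^ (M + 1), X 1 ^ (N + 1)} := by
  set r := f - (trunc' R (bideg M N) f : MvPowerSeries (Fin 2) R)
  have hr : ∀ d, d 0 ≤ M → d 1 ≤ N → coeff d r = 0 := fun d h0 h1 => by
    simp [r, coeff_trunc', le_bideg_iff, h0, h1]
  let r₀ : MvPowerSeries (Fin 2) R := fun d => if M < d 0 then coeff d r else 0
  have hr₀ : ∀ d, coeff d r₀ = if M < d 0 then coeff d r else 0 := fun d => rfl
  obtain ⟨u, hu⟩ : X 0 ^ (M + 1) ∣ r₀ := X_pow_dvd_iff.2 fun d hd => by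
    rw [hr₀, if_neg (by omega)]
  obtain ⟨v, hv⟩ : X 1 ^ (N + 1) ∣ r - r₀ := X_pow_dvd_iff.2 fun d hd => by
    by_cases h0 : M < d 0
    · rw [map_sub, hr₀, if_pos h0, sub_self]
    · rw [map_sub, hr₀, if_neg h0, hr d (by omega) (by omega), sub_zero]
  exact Ideal.mem_span_pair.2 ⟨u, v, by rw [mul_comm, ← hu, mul_comm, ← hv, add_sub_cancel]⟩

theorem top_le_span_X_pow_mul_X_pow {F : Type*} [Field F] (I : Ideal (MvPowerSeries (Fin 2) F))
    {M N : ℕ} (hX₀ : X 0 ^ (M + 1) ∈ I) (hX₁ : X 1 ^ (N + 1) ∈ I) :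
    ⊤ ≤ span F (Set.range fun p : ℕ × ℕ => Ideal.Quotient.mkₐ F I (X 0 ^ p.1 * X 1 ^ p.2)) := by
  rintro q -
  obtain ⟨f, rfl⟩ := Ideal.Quotient.mkₐ_surjective F I q
  have hf : Ideal.Quotient.mkₐ F I f = Ideal.Quotient.mkₐ F I (trunc' F (bideg M N) f) := by
    refine Ideal.Quotient.eq.2 (Ideal.span_le.2 ?_ (sub_trunc'_mem_span_X_pow f M N))
    simp [Set.insert_subset_iff, hX₀, hX₁]
  rw [hf]
  induction trunc' F (bideg M N) f using MvPolynomial.induction_on' with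
  | monomial d c =>
    rw [MvPolynomial.coe_monomial, ← mul_one c, ← smul_eq_mul, map_smul, eq_bideg d,
      monomial_bideg_one, map_smul]
    exact smul_mem _ _ (subset_span ⟨(d 0, d 1), rfl⟩)
  | add p q hp hq => rw [MvPolynomial.coe_add, map_add]; exact add_mem hp hq

section CommRing

variable {R : Type*} [CommRing R]

theorem sum_range_neg_one_pow_mul_add_eq_zero (A C : ℕ → R) (n : ℕ) (hC : C 0 = 0)
    (hA : A n = 0) (hAC : ∀ s < n, C (s + 1) = A s) :
    ∑ s ∈ Finset.range (n + 1), (-1) ^ s * (A s + C s) = 0 := by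
  simp only [mul_add, Finset.sum_add_distrib]
  rw [Finset.sum_range_succ, hA, Finset.sum_range_succ', hC, mul_zero, mul_zero, add_zero,
    add_zero, ← Finset.sum_add_distrib]
  refine Finset.sum_eq_zero fun s hs => ?_
  rw [hAC s (Finset.mem_range.1 hs), pow_succ]
  ring

/- Modulo `x ^ 2 * y + y ^ (K + 1)`, `x ^ (a - 2 * s) * y ^ (b + s * K) ≡ (-1) ^ s * x ^ a * y ^ b`,
and for `1 ≤ b ≤ K` these are the only monomials reducing to `x ^ a * y ^ b`; so for `p` in
`basisExps m K` this is the coefficient of `x ^ p.1 * y ^ p.2` in the reduced form of a series. -/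
variable (R) in
noncomputable def reducedCoeff (K : ℕ) (p : ℕ × ℕ) : MvPowerSeries (Fin 2) R →ₗ[R] R :=
  if p.2 = 0 then coeff (bideg p.1 0)
  else ∑ s ∈ Finset.range (p.1 / 2 + 1), (-1 : R) ^ s • coeff (bideg (p.1 - 2 * s) (p.2 + s * K))

theorem reducedCoeff_apply_of_eq_zero (K a : ℕ) (f : MvPowerSeries (Fin 2) R) :
    reducedCoeff R K (a, 0) f = coeff (bideg a 0) f := by
  simp [reducedCoeff]

theorem reducedCoeff_apply_of_ne_zero (K : ℕ) {a b : ℕ} (hb : b ≠ 0) (f : MvPowerSeries (Fin 2) R) :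
    reducedCoeff R K (a, b) f =
      ∑ s ∈ Finset.range (a / 2 + 1), (-1) ^ s * coeff (bideg (a - 2 * s) (b + s * K)) f := by
  simp [reducedCoeff, hb]

theorem reducedCoeff_mul_X_pow_mul_X_pow (K : ℕ) {p : ℕ × ℕ} {i j : ℕ}
    (h : p.1 < i ∨ p.2 = 0 ∧ 0 < j) (g : MvPowerSeries (Fin 2) R) :
    reducedCoeff R K p (g * (X 0 ^ i * X 1 ^ j)) = 0 := by
  obtain ⟨a, b⟩ := p
  rcases eq_or_ne b 0 with rfl | hb
  · rw [reducedCoeff_apply_of_eq_zero, coeff_bideg_mul_X_pow_mul_X_pow, if_neg (by omega)]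
  · rw [reducedCoeff_apply_of_ne_zero K hb]
    refine Finset.sum_eq_zero fun s _ => ?_
    rw [coeff_bideg_mul_X_pow_mul_X_pow, if_neg (by omega), mul_zero]

theorem reducedCoeff_mul_relation {K : ℕ} {p : ℕ × ℕ} (hp : p.2 ≤ K)
    (g : MvPowerSeries (Fin 2) R) :
    reducedCoeff R K p (g * (X 0 ^ 2 * X 1 + X 1 ^ (K + 1))) = 0 := by
  obtain ⟨a, b⟩ := p
  have hrel : (X 0 ^ 2 * X 1 + X 1 ^ (K + 1) : MvPowerSeries (Fin 2) R) =
      X 0 ^ 2 * X 1 ^ 1 + X 0 ^ 0 * X 1 ^ (K + 1) := by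
    rw [pow_one, pow_zero, one_mul]
  rw [hrel, mul_add, map_add]
  rcases eq_or_ne b 0 with rfl | hb
  · rw [reducedCoeff_apply_of_eq_zero, reducedCoeff_apply_of_eq_zero,
      coeff_bideg_mul_X_pow_mul_X_pow, coeff_bideg_mul_X_pow_mul_X_pow, if_neg (by omega),
      if_neg (by omega), add_zero]
  rw [reducedCoeff_apply_of_ne_zero K hb, reducedCoeff_apply_of_ne_zero K hb,
    ← Finset.sum_add_distrib]
  simp only [← mul_add]
  refine sum_range_neg_one_pow_mul_add_eq_zero _ _ _ ?_ ?_ fun s hs => ?_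
  · rw [coeff_bideg_mul_X_pow_mul_X_pow, if_neg (by omega)]
  · rw [coeff_bideg_mul_X_pow_mul_X_pow, if_neg (by omega)]
  · rw [coeff_bideg_mul_X_pow_mul_X_pow, coeff_bideg_mul_X_pow_mul_X_pow, add_mul, one_mul,
      if_pos (by omega), if_pos (by omega)]
    congr 3; omega

theorem reducedCoeff_X_pow_mul_X_pow (K : ℕ) (p : ℕ × ℕ) {q : ℕ × ℕ} (hq : q.2 ≤ K) :
    reducedCoeff R K p (X 0 ^ q.1 * X 1 ^ q.2) = if p = q then 1 else 0 := by
  obtain ⟨a, b⟩ := p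
  obtain ⟨c, e⟩ := q
  rcases eq_or_ne b 0 with rfl | hb
  · simp only [reducedCoeff_apply_of_eq_zero, coeff_bideg_X_pow_mul_X_pow, Prod.mk.injEq]
  rw [reducedCoeff_apply_of_ne_zero K hb, Finset.sum_eq_single_of_mem 0 (by simp)]
  · simp [coeff_bideg_X_pow_mul_X_pow]
  · intro s _ hs
    have : K ≤ s * K := Nat.le_mul_of_pos_left K (Nat.pos_of_ne_zero hs)
    rw [coeff_bideg_X_pow_mul_X_pow, if_neg (by omega), mul_zero]

variable (R) in
noncomputable def dkIdeal (m K : ℕ) : Ideal (MvPowerSeries (Fin 2) R) :=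
  Ideal.span {X 0 ^ (m + 1), X 0 ^ m * X 1, X 0 ^ 2 * X 1 + X 1 ^ (K + 1)}

variable {m K : ℕ}

theorem X_zero_pow_mem_dkIdeal : X 0 ^ (m + 1) ∈ dkIdeal R m K :=
  Ideal.subset_span (by simp)

theorem mk_X_zero_pow_eq_zero :
    Ideal.Quotient.mk (dkIdeal R m K) (X 0) ^ (m + 1) = 0 := by
  rw [← map_pow, Ideal.Quotient.eq_zero_iff_mem]
  exact X_zero_pow_mem_dkIdeal

theorem mk_X_zero_pow_mul_mk_X_one_eq_zero :
    Ideal.Quotient.mk (dkIdeal R m K) (X 0) ^ m * Ideal.Quotient.mk (dkIdeal R m K) (X 1) = 0 := by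
  rw [← map_pow, ← map_mul, Ideal.Quotient.eq_zero_iff_mem]
  exact Ideal.subset_span (by simp)

theorem mk_relation_eq_zero :
    Ideal.Quotient.mk (dkIdeal R m K) (X 0) ^ 2 * Ideal.Quotient.mk (dkIdeal R m K) (X 1) +
      Ideal.Quotient.mk (dkIdeal R m K) (X 1) ^ (K + 1) = 0 := by
  rw [← map_pow, ← map_mul, ← map_pow, ← map_add, Ideal.Quotient.eq_zero_iff_mem]
  exact Ideal.subset_span (by simp)

theorem X_one_pow_mem_dkIdeal : X 1 ^ (m * K + 1) ∈ dkIdeal R m K := by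
  set x := Ideal.Quotient.mk (dkIdeal R m K) (X 0)
  set y := Ideal.Quotient.mk (dkIdeal R m K) (X 1)
  rw [← Ideal.Quotient.eq_zero_iff_mem, map_pow]
  calc y ^ (m * K + 1) = (-x ^ 2) ^ m * y := pow_mul_add_one_eq_neg_sq_pow_mul mk_relation_eq_zero m
    _ = (-1) ^ m * x ^ m * (x ^ m * y) := by ring
    _ = 0 := by rw [mk_X_zero_pow_mul_mk_X_one_eq_zero, mul_zero]

theorem reducedCoeff_eq_zero_of_mem {p : ℕ × ℕ} (hp : p ∈ basisExps m K)
    {f : MvPowerSeries (Fin 2) R} (hf : f ∈ dkIdeal R m K) : reducedCoeff R K p f = 0 := by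
  obtain ⟨a, b⟩ := p
  have hab := mem_basisExps.1 hp
  obtain ⟨g₁, f₁, hf₁, rfl⟩ := Ideal.mem_span_insert.1 hf
  obtain ⟨g₂, f₂, hf₂, rfl⟩ := Ideal.mem_span_insert.1 hf₁
  obtain ⟨g₃, rfl⟩ := Ideal.mem_span_singleton'.1 hf₂
  have h₁ := reducedCoeff_mul_X_pow_mul_X_pow K (p := (a, b)) (i := m + 1) (j := 0) (by omega) g₁
  have h₂ := reducedCoeff_mul_X_pow_mul_X_pow K (p := (a, b)) (i := m) (j := 1) (by omega) g₂
  rw [pow_zero, mul_one] at h₁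
  rw [pow_one] at h₂
  rw [map_add, map_add, h₁, h₂, reducedCoeff_mul_relation (by omega), add_zero, add_zero]

end CommRing

theorem finrank_quotient_dkIdeal {F : Type*} [Field F] {m K : ℕ} (hK : 1 ≤ K) :
    finrank F (MvPowerSeries (Fin 2) F ⧸ dkIdeal F m K) = m * (K + 1) + 1 := by
  rw [← card_basisExps, ← Fintype.card_coe]
  refine finrank_quotient_eq_card_of_dual _ (fun p : basisExps m K => X 0 ^ p.1.1 * X 1 ^ p.1.2)
    ?_ (LinearMap.pi fun p => reducedCoeff F K p.1)
    (fun f hf => funext fun p => reducedCoeff_eq_zero_of_mem p.2 hf) fun q => funext fun p => ?_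
  · refine (top_le_span_X_pow_mul_X_pow _ X_zero_pow_mem_dkIdeal X_one_pow_mem_dkIdeal).trans
      (span_le.2 ?_)
    rintro _ ⟨⟨a, b⟩, rfl⟩
    simp only [Function.comp_def, map_mul, map_pow]
    exact pow_mul_pow_mem_span_basisExps hK mk_X_zero_pow_eq_zero
      mk_X_zero_pow_mul_mk_X_one_eq_zero mk_relation_eq_zero a b
  · rw [LinearMap.pi_apply, reducedCoeff_X_pow_mul_X_pow K _ (snd_le_of_mem_basisExps q.2),
      Pi.single_apply]
    simp only [Subtype.coe_inj]

end DkQuotient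

theorem Dk_dim_B_f_general (k m : ℕ) (hk : 4 ≤ k) :
    Module.finrank ℂ
      (MvPowerSeries (Fin 2) ℂ ⧸
        Ideal.span ({MvPowerSeries.X 0 ^ (m + 1),
          MvPowerSeries.X 0 ^ m * MvPowerSeries.X 1,
          MvPowerSeries.X 0 ^ 2 * MvPowerSeries.X 1 + MvPowerSeries.X 1 ^ (k - 1)} :
          Set (MvPowerSeries (Fin 2) ℂ))) = m * (k - 1) + 1 := by
  rw [show k - 1 = k - 2 + 1 by omega]
  exact DkQuotient.finrank_quotient_dkIdeal (by omega)

/-- `dim_ℂ ℂ[[x,y]]/(x^{m+1}, x^m y, x²y + y^{k−1}) = m(k−1) + 1`. -/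
theorem Dk_dim_B_f (k m : ℕ) (hk : 4 ≤ k) (hm : 2 ≤ m) :
    Module.finrank ℂ
      (MvPowerSeries (Fin 2) ℂ ⧸
        Ideal.span ({MvPowerSeries.X 0 ^ (m + 1),
          MvPowerSeries.X 0 ^ m * MvPowerSeries.X 1,
          MvPowerSeries.X 0 ^ 2 * MvPowerSeries.X 1 + MvPowerSeries.X 1 ^ (k - 1)} :
          Set (MvPowerSeries (Fin 2) ℂ))) = m * (k - 1) + 1 :=
  Dk_dim_B_f_general k m hk
end
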